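/- Let A be a left brace of cardinality p^n such that p^i A is an ideal of A for every i, let ξ be an integer with ξ^{p−1} ≡ 1 (mod p^n) and ξ^j ≢ 1 (mod p) for 0 < j < p−1, and let k satisfy p^{(p−1)k} A = 0. Define a·b = Σ_{i=0}^{p−2} ξ^{p−1−i}((ξ^i a) * b). Then for all a, b ∈ p^k A and b', c ∈ A: (a+b)·c = a·c + b·c, a·(b'+c) = a·b' + a·c, and (a·b)·c − a·(b·c) = (b·a)·c − b·(a·c). In particular (p^k A, +, ·) is a pre-Lie ring. -/

import Mathlib

universe u

class LeftBrace (A : Type u) extends AddCommGroup A where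
  circ : A → A → A
  circ_assoc : ∀ a b c : A, circ (circ a b) c = circ a (circ b c)
  zero_circ : ∀ a : A, circ 0 a = a
  circ_zero : ∀ a : A, circ a 0 = a
  cinv : A → A
  cinv_circ : ∀ a : A, circ (cinv a) a = 0
  circ_add : ∀ a b c : A, circ a (b + c) + a = circ a b + circ a c

namespace LeftBrace

variable {A : Type u} [LeftBrace A]

/-- `a * b = a∘b - a - b`. -/
def star (a b : A) : A := circ a b - a - b

/-- `cpow a j` is the `j`-th power of `a` in the group `(A, ∘)` (whose identity is `0`). -/
def cpow (a : A) : ℕ → A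
  | 0 => 0
  | n+1 => circ a (cpow a n)

/-- `eFun a i = e_{i+1}(a)`: `eFun a 0 = a`, `eFun a (i+1) = a * eFun a i`. -/
def eFun (a : A) : ℕ → A
  | 0 => a
  | i+1 => star a (eFun a i)

/-- `eStar a b i = e_{i+1}'(a,b)`: `eStar a b 0 = a*b`, `eStar a b (i+1) = a * eStar a b i`. -/
def eStar (a b : A) : ℕ → A
  | 0 => star a b
  | i+1 => star a (eStar a b i)

/-- `nSet A m = mA = {m a : a ∈ A}`. -/
def nSet (A : Type u) [LeftBrace A] (m : ℕ) : Set A := {x | ∃ a : A, m • a = x}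

/-- `annSet A m = ann(m) = {a ∈ A : m a = 0}`. -/
def annSet (A : Type u) [LeftBrace A] (m : ℕ) : Set A := {a : A | m • a = 0}

/-- An ideal of a brace: an additive subgroup closed under `i*a` and `a*i`. -/
def IsBraceIdeal (I : Set A) : Prop :=
  0 ∈ I ∧ (∀ x ∈ I, ∀ y ∈ I, x + y ∈ I) ∧ (∀ x ∈ I, -x ∈ I) ∧
    ∀ x ∈ I, ∀ a : A, star x a ∈ I ∧ star a x ∈ I

/-- Property 1': `e'_{⌊(p-1)/4⌋}(a,b) ∈ pA` for all `a, b`. -/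
def Prop1' (A : Type u) [LeftBrace A] (p : ℕ) : Prop :=
  ∀ a b : A, eStar a b ((p-1)/4 - 1) ∈ nSet A p

/-- Property 1'': `e'_{⌊(p-1)/4⌋}(a, ann(p^i)) ⊆ ann(p^{i-1})` for all `i ≥ 1`. -/
def Prop1'' (A : Type u) [LeftBrace A] (p : ℕ) : Prop :=
  ∀ i : ℕ, 1 ≤ i → ∀ a x : A, (p^i) • x = 0 →
    (p^(i-1)) • eStar a x ((p-1)/4 - 1) = 0

end LeftBrace

namespace LeftBrace

/-- `a · b = Σ_{i=0}^{p−2} ξ^{p−1−i}((ξ^i a) * b)`. -/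
def dotOp {A : Type u} [LeftBrace A] (p : ℕ) (ξ : ℤ) (a b : A) : A :=
  ∑ i ∈ Finset.range (p - 1), (ξ ^ (p - 1 - i)) • star ((ξ ^ i) • a) b

end LeftBrace

namespace LeftBrace

variable {A : Type u} [LeftBrace A]

theorem circ_add' (a b c : A) : circ a (b + c) = circ a b + circ a c - a :=
  eq_sub_of_add_eq (circ_add a b c)

theorem circ_neg' (a b : A) : circ a (-b) = a + a - circ a b := by
  have h0 := circ_add a b (-b)
  rw [add_neg_cancel, circ_zero] at h0
  exact eq_sub_of_add_eq' h0.symm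

theorem circ_cinv (a : A) : circ a (cinv a) = 0 := by
  have h1 : circ (cinv (cinv a)) (cinv a) = 0 := cinv_circ _
  have h2 : cinv (cinv a) = a := by
    have : circ (circ (cinv (cinv a)) (cinv a)) a = circ (cinv (cinv a)) (circ (cinv a) a) :=
      circ_assoc _ _ _
    rw [h1, zero_circ, cinv_circ, circ_zero] at this
    exact this.symm
  have := h1
  rw [h2] at this
  exact this

theorem star_add (a b c : A) : star a (b + c) = star a b + star a c := by
  simp only [star, circ_add' a b c]; abel

theorem star_zero (a : A) : star a 0 = 0 := by simp [star, circ_zero]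

theorem zero_star (a : A) : star 0 a = 0 := by simp [star, zero_circ]

/-- `star a` as an additive homomorphism. -/
def starHom (a : A) : A →+ A where
  toFun := star a
  map_zero' := star_zero a
  map_add' := star_add a

@[simp] theorem starHom_apply (a b : A) : starHom a b = star a b := rfl

theorem star_nsmul (a : A) (m : ℕ) (b : A) : star a (m • b) = m • star a b :=
  (starHom a).map_nsmul m b

theorem star_zsmul (a : A) (z : ℤ) (b : A) : star a (z • b) = z • star a b :=
  (starHom a).map_zsmul z b

theorem star_sub (a b c : A) : star a (b - c) = star a b - star a c :=
  (starHom a).map_sub b c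

theorem star_neg (a b : A) : star a (-b) = -star a b := (starHom a).map_neg b

theorem circ_eq (a b : A) : circ a b = a + b + star a b := by simp only [star]; abel

def lam (a b : A) : A := b + star a b

def mu (a b : A) : A := lam (cinv a) b

/-- `lam a` as an additive homomorphism. -/
def lamHom (a : A) : A →+ A where
  toFun := lam a
  map_zero' := by simp [lam, star_zero]
  map_add' := fun b c => by simp [lam, star_add]; abel

@[simp] theorem lamHom_apply (a b : A) : lamHom a b = lam a b := rfl

theorem lam_eq (a b : A) : lam a b = circ a b - a := by simp only [lam, star]; abel

theorem circ_eq_lam (a b : A) : circ a b = a + lam a b := by rw [lam_eq]; abel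

theorem lam_circ (a b c : A) : lam (circ a b) c = lam a (lam b c) := by
  simp only [lam_eq]
  rw [circ_assoc]
  rw [show circ b c - b = (circ b c) + (- b) by abel, circ_add', circ_neg']
  abel

theorem lam_mu (a b : A) : lam a (mu a b) = b := by
  have := (lam_circ a (cinv a) b).symm
  rw [circ_cinv] at this
  simpa [lam, zero_star, mu] using this

theorem mu_lam (a b : A) : mu a (lam a b) = b := by
  have := (lam_circ (cinv a) a b).symm
  rw [cinv_circ] at this
  simpa [lam, zero_star, mu] using this

/-- `mu a` as an additive homomorphism. -/
def muHom (a : A) : A →+ A := lamHom (cinv a)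

@[simp] theorem muHom_apply (a b : A) : muHom a b = mu a b := rfl

theorem mu_nsmul (a : A) (m : ℕ) (b : A) : mu a (m • b) = m • mu a b :=
  (muHom a).map_nsmul m b

theorem mu_sub (a b c : A) : mu a (b - c) = mu a b - mu a c := (muHom a).map_sub b c

theorem mu_eq (a b : A) : mu a b = b + star (cinv a) b := rfl

theorem star_mu_eq (a b : A) : star a (mu a b) = b - mu a b := by
  have h := lam_mu a b
  simp only [lam] at h
  exact eq_sub_of_add_eq' h

/-- The brace relation: `(a∘b)*c = a*(b*c) + a*c + b*c`. -/
theorem star_circ (a b c : A) : star (circ a b) c = star a (star b c) + star a c + star b c := by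
  simp only [star]
  have h1 : circ a (circ b c - b - c) = circ (circ a b) c - circ a b - circ a c + a + a := by
    rw [show circ b c - b - c = (circ b c - b) + (-c) by abel, circ_add']
    rw [show circ b c - b = circ b c + (-b) by abel, circ_add']
    rw [circ_neg', circ_neg', circ_assoc]; abel
  rw [h1]; abel

/-- The shift identity: `(v+z)*c = v*c + lam v ((mu v z)*c)`. -/
theorem star_add_left (v z c : A) :
    star (v + z) c = star v c + lam v (star (mu v z) c) := by
  have hvz : v + z = circ v (mu v z) := by rw [circ_eq_lam, lam_mu]
  rw [hvz, star_circ]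
  simp [lam]; abel


section Filtration

variable {p k : ℕ}

theorem nSet_zero_mem (m : ℕ) : (0 : A) ∈ nSet A m := ⟨0, smul_zero m⟩

theorem nSet_add_mem {m : ℕ} {x y : A} (hx : x ∈ nSet A m) (hy : y ∈ nSet A m) :
    x + y ∈ nSet A m := by
  obtain ⟨x', hx⟩ := hx; obtain ⟨y', hy⟩ := hy
  exact ⟨x' + y', by rw [smul_add, hx, hy]⟩

theorem nSet_neg_mem {m : ℕ} {x : A} (hx : x ∈ nSet A m) : -x ∈ nSet A m := by
  obtain ⟨x', hx⟩ := hx; exact ⟨-x', by rw [smul_neg, hx]⟩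

theorem nSet_sub_mem {m : ℕ} {x y : A} (hx : x ∈ nSet A m) (hy : y ∈ nSet A m) :
    x - y ∈ nSet A m := by
  rw [sub_eq_add_neg]; exact nSet_add_mem hx (nSet_neg_mem hy)

theorem nSet_nsmul_mem {m : ℕ} (r : ℕ) {x : A} (hx : x ∈ nSet A m) : r • x ∈ nSet A m := by
  obtain ⟨x', hx⟩ := hx; exact ⟨r • x', by rw [smul_comm, hx]⟩

theorem nSet_zsmul_mem {m : ℕ} (r : ℤ) {x : A} (hx : x ∈ nSet A m) : r • x ∈ nSet A m := by
  obtain ⟨x', hx⟩ := hx; exact ⟨r • x', by rw [smul_comm, hx]⟩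

theorem nSet_sum_mem {m : ℕ} {ι : Type*} (s : Finset ι) (f : ι → A)
    (h : ∀ i ∈ s, f i ∈ nSet A m) : (∑ i ∈ s, f i) ∈ nSet A m := by
  classical
  induction s using Finset.induction_on with
  | empty => simpa using nSet_zero_mem m
  | insert _ _ hni ih =>
    rw [Finset.sum_insert hni]
    exact nSet_add_mem (h _ (Finset.mem_insert_self _ _))
      (ih fun i hi => h i (Finset.mem_insert_of_mem hi))

theorem nSet_one_mem (x : A) : x ∈ nSet A 1 := ⟨x, one_smul ℕ x⟩

theorem nSet_pow_zero_mem (p : ℕ) (x : A) : x ∈ nSet A (p ^ 0) := by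
  rw [pow_zero]; exact nSet_one_mem x

theorem nSet_pow_mono {i j : ℕ} (hij : i ≤ j) {x : A} (hx : x ∈ nSet A (p ^ j)) :
    x ∈ nSet A (p ^ i) := by
  obtain ⟨y, hy⟩ := hx
  refine ⟨p ^ (j - i) • y, ?_⟩
  rw [← mul_smul, ← pow_add, Nat.add_sub_cancel' hij, hy]

variable (hideal : ∀ i : ℕ, IsBraceIdeal (nSet A (p ^ i)))
include hideal

theorem star_mem_left {i : ℕ} {x : A} (hx : x ∈ nSet A (p ^ i)) (y : A) :
    star x y ∈ nSet A (p ^ i) := ((hideal i).2.2.2 x hx y).1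

theorem star_mem_right {i : ℕ} {x : A} (hx : x ∈ nSet A (p ^ i)) (y : A) :
    star y x ∈ nSet A (p ^ i) := ((hideal i).2.2.2 x hx y).2

theorem star_mem_add {s t : ℕ} {x y : A} (hx : x ∈ nSet A (p ^ s)) (hy : y ∈ nSet A (p ^ t)) :
    star x y ∈ nSet A (p ^ (s + t)) := by
  obtain ⟨y', hy⟩ := hy
  obtain ⟨u, hu⟩ := star_mem_left hideal hx y'
  refine ⟨u, ?_⟩
  rw [pow_add, mul_comm, mul_smul, hu, ← star_nsmul, hy]

theorem lam_mem {j : ℕ} (v : A) {w : A} (hw : w ∈ nSet A (p ^ j)) :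
    lam v w ∈ nSet A (p ^ j) :=
  nSet_add_mem hw (star_mem_right hideal hw v)

theorem mu_mem {j : ℕ} (v : A) {w : A} (hw : w ∈ nSet A (p ^ j)) :
    mu v w ∈ nSet A (p ^ j) :=
  nSet_add_mem hw (star_mem_right hideal hw (cinv v))

theorem starpow_mem {v : A} (hv : v ∈ nSet A (p ^ k)) (w : A) (j : ℕ) :
    (star v)^[j] w ∈ nSet A (p ^ (j * k)) := by
  induction j with
  | zero => simpa using nSet_one_mem w
  | succ j ih =>
    rw [Function.iterate_succ_apply']
    have := star_mem_add hideal hv ih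
    rwa [show k + j * k = (j+1) * k by ring] at this

end Filtration

section Series

variable {p k : ℕ}
variable (hideal : ∀ i : ℕ, IsBraceIdeal (nSet A (p ^ i)))
variable (hk : ∀ x : A, (p ^ ((p - 1) * k)) • x = 0)
include hideal hk

theorem nSet_top_eq_zero {x : A} (hx : x ∈ nSet A (p ^ ((p - 1) * k))) : x = 0 := by
  obtain ⟨y, hy⟩ := hx; rw [← hy, hk]

theorem nSet_big_eq_zero {j : ℕ} (hj : p - 1 ≤ j) {x : A} (hx : x ∈ nSet A (p ^ (j * k))) :
    x = 0 :=
  nSet_top_eq_zero hideal hk (nSet_pow_mono (Nat.mul_le_mul_right k hj) hx)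

theorem mu_series {v : A} (hv : v ∈ nSet A (p ^ k)) (w : A) :
    mu v w = ∑ j ∈ Finset.range (p - 1), ((-1 : ℤ) ^ j) • (star v)^[j] w := by
  have htop : (star v)^[p-1] w = 0 :=
    nSet_big_eq_zero hideal hk le_rfl (starpow_mem hideal hv w (p-1))
  have hlam : lam v (∑ j ∈ Finset.range (p - 1), ((-1 : ℤ) ^ j) • (star v)^[j] w) = w := by
    have hstar : star v (∑ j ∈ Finset.range (p - 1), ((-1 : ℤ) ^ j) • (star v)^[j] w)
        = ∑ j ∈ Finset.range (p - 1), ((-1 : ℤ) ^ j) • (star v)^[j+1] w := by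
      rw [← starHom_apply, map_sum]
      refine Finset.sum_congr rfl fun j _ => ?_
      rw [map_zsmul, starHom_apply, ← Function.iterate_succ_apply' (star v)]
    rw [lam, hstar, ← Finset.sum_add_distrib]
    have hcong : ∀ j ∈ Finset.range (p - 1),
        ((-1 : ℤ) ^ j) • (star v)^[j] w + ((-1 : ℤ) ^ j) • (star v)^[j+1] w
        = (fun j => ((-1 : ℤ) ^ j) • (star v)^[j] w) j
          - (fun j => ((-1 : ℤ) ^ j) • (star v)^[j] w) (j+1) := by
      intro j _
      simp only [pow_succ, mul_neg_one, neg_smul, sub_neg_eq_add]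
    rw [Finset.sum_congr rfl hcong, Finset.sum_range_sub']
    simp [htop]
  have h2 := mu_lam v (∑ j ∈ Finset.range (p - 1), ((-1 : ℤ) ^ j) • (star v)^[j] w)
  rw [hlam] at h2
  exact h2

end Series



section Calculus

/-! ### One and two variable difference calculus -/

def Dl (f : ℕ → A) : ℕ → A := fun m => f (m+1) - f m

def D1 (F : ℕ → ℕ → A) : ℕ → ℕ → A := fun m m' => F (m+1) m' - F m m'

def D2 (F : ℕ → ℕ → A) : ℕ → ℕ → A := fun m m' => F m (m'+1) - F m m'

def DD (s t : ℕ) (F : ℕ → ℕ → A) : ℕ → ℕ → A := D1^[s] (D2^[t] F)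

theorem D1_D2_comm (F : ℕ → ℕ → A) : D1 (D2 F) = D2 (D1 F) := by
  funext m m'; simp only [D1, D2]; abel

theorem D1_iter_D2 (t : ℕ) (F : ℕ → ℕ → A) : D1 (D2^[t] F) = D2^[t] (D1 F) := by
  induction t generalizing F with
  | zero => rfl
  | succ t ih =>
    rw [Function.iterate_succ_apply, Function.iterate_succ_apply, ih (D2 F), D1_D2_comm]

theorem DD_succ_left (s t : ℕ) (F : ℕ → ℕ → A) : DD (s+1) t F = DD s t (D1 F) := by
  simp only [DD, Function.iterate_succ_apply, D1_iter_D2]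

theorem DD_succ_right (s t : ℕ) (F : ℕ → ℕ → A) : DD s (t+1) F = DD s t (D2 F) := by
  simp only [DD, Function.iterate_succ_apply]

theorem DD_zero_zero (F : ℕ → ℕ → A) : DD 0 0 F = F := rfl

theorem D1_addF (F G : ℕ → ℕ → A) :
    D1 (fun m m' => F m m' + G m m') = fun m m' => D1 F m m' + D1 G m m' := by
  funext m m'; simp only [D1]; abel

theorem D2_addF (F G : ℕ → ℕ → A) :
    D2 (fun m m' => F m m' + G m m') = fun m m' => D2 F m m' + D2 G m m' := by
  funext m m'; simp only [D2]; abel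

theorem D1_zsmulF (z : ℤ) (F : ℕ → ℕ → A) :
    D1 (fun m m' => z • F m m') = fun m m' => z • D1 F m m' := by
  funext m m'; simp only [D1, smul_sub]

theorem D2_zsmulF (z : ℤ) (F : ℕ → ℕ → A) :
    D2 (fun m m' => z • F m m') = fun m m' => z • D2 F m m' := by
  funext m m'; simp only [D2, smul_sub]

theorem DD_addF (s t : ℕ) (F G : ℕ → ℕ → A) :
    DD s t (fun m m' => F m m' + G m m') = fun m m' => DD s t F m m' + DD s t G m m' := by
  induction t generalizing F G with
  | zero =>
    induction s generalizing F G with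
    | zero => rfl
    | succ s ihs => rw [DD_succ_left, DD_succ_left, DD_succ_left, D1_addF, ihs]
  | succ t iht => rw [DD_succ_right, DD_succ_right, DD_succ_right, D2_addF, iht]

theorem DD_zsmulF (s t : ℕ) (z : ℤ) (F : ℕ → ℕ → A) :
    DD s t (fun m m' => z • F m m') = fun m m' => z • DD s t F m m' := by
  induction t generalizing F with
  | zero =>
    induction s generalizing F with
    | zero => rfl
    | succ s ihs => rw [DD_succ_left, DD_succ_left, D1_zsmulF, ihs]
  | succ t iht => rw [DD_succ_right, DD_succ_right, D2_zsmulF, iht]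

theorem DD_sumF {ι : Type*} (s t : ℕ) (u : Finset ι) (F : ι → ℕ → ℕ → A) :
    DD s t (fun m m' => ∑ i ∈ u, F i m m') = fun m m' => ∑ i ∈ u, DD s t (F i) m m' := by
  classical
  induction u using Finset.induction_on with
  | empty =>
    simp only [Finset.sum_empty]
    have : (fun (_ : ℕ) (_ : ℕ) => (0 : A)) = fun m m' => (0:ℤ) • (fun (_ : ℕ) (_ : ℕ) => (0:A)) m m' := by
      funext; simp
    rw [this, DD_zsmulF]; funext; simp
  | insert _ _ hni ih =>
    simp only [Finset.sum_insert hni]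
    rw [DD_addF, ih]

def shift1 (F : ℕ → ℕ → A) : ℕ → ℕ → A := fun m m' => F (m+1) m'

def shift2 (F : ℕ → ℕ → A) : ℕ → ℕ → A := fun m m' => F m (m'+1)

theorem DD_shift1 (s t : ℕ) (F : ℕ → ℕ → A) :
    DD s t (shift1 F) = fun m m' => DD s t F (m+1) m' := by
  have h1 : ∀ (X : ℕ → ℕ → A), D1 (shift1 X) = shift1 (D1 X) := fun X => rfl
  have h2 : ∀ (X : ℕ → ℕ → A), D2 (shift1 X) = shift1 (D2 X) := fun X => rfl
  induction t generalizing F with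
  | zero =>
    induction s generalizing F with
    | zero => rfl
    | succ s ihs => rw [DD_succ_left, DD_succ_left, h1, ihs]
  | succ t iht => rw [DD_succ_right, DD_succ_right, h2, iht]

theorem DD_shift2 (s t : ℕ) (F : ℕ → ℕ → A) :
    DD s t (shift2 F) = fun m m' => DD s t F m (m'+1) := by
  have h1 : ∀ (X : ℕ → ℕ → A), D1 (shift2 X) = shift2 (D1 X) := fun X => rfl
  have h2 : ∀ (X : ℕ → ℕ → A), D2 (shift2 X) = shift2 (D2 X) := fun X => rfl
  induction t generalizing F with
  | zero =>
    induction s generalizing F with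
    | zero => rfl
    | succ s ihs => rw [DD_succ_left, DD_succ_left, h1, ihs]
  | succ t iht => rw [DD_succ_right, DD_succ_right, h2, iht]

/-- Vanishing of pure-row data when the bottom row vanishes. -/
theorem D1_iter_row_zero {K : ℕ → ℕ → A} (h : ∀ m, K m 0 = 0) (s : ℕ) :
    ∀ m, (D1^[s] K) m 0 = 0 := by
  induction s generalizing K with
  | zero => exact h
  | succ s ih =>
    intro m
    rw [Function.iterate_succ_apply]
    exact ih (fun m => by simp only [D1, h, sub_zero]) m

theorem D2_iter_col_zero {K : ℕ → ℕ → A} (h : ∀ m', K 0 m' = 0) (t : ℕ) :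
    ∀ m', (D2^[t] K) 0 m' = 0 := by
  induction t generalizing K with
  | zero => exact h
  | succ t ih =>
    intro m'
    rw [Function.iterate_succ_apply]
    exact ih (fun m' => by simp only [D2, h, sub_zero]) m'

theorem DD_border_left {K : ℕ → ℕ → A} (h : ∀ m, K m 0 = 0) (s : ℕ) :
    DD s 0 K 0 0 = 0 := D1_iter_row_zero h s 0

theorem DD_border_right {K : ℕ → ℕ → A} (h : ∀ m', K 0 m' = 0) (s t : ℕ) (hs : s = 0) :
    DD s t K 0 0 = 0 := by
  subst hs
  exact D2_iter_col_zero h t 0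

/-! ### Newton expansion -/

theorem newton1 : ∀ (m : ℕ) (f : ℕ → A),
    f m = ∑ j ∈ Finset.range (m+1), (m.choose j) • (Dl^[j] f) 0 := by
  intro m
  induction m with
  | zero => intro f; simp
  | succ m ih =>
    intro f
    have hstep : f (m+1) = f m + (Dl f) m := by simp [Dl]
    rw [hstep, ih f, ih (Dl f)]
    have hDl : ∀ j, (Dl^[j] (Dl f)) 0 = (Dl^[j+1] f) 0 := by
      intro j; rw [Function.iterate_succ_apply]
    have h2 : ∑ j ∈ Finset.range (m+1), (m.choose j) • (Dl^[j] (Dl f)) 0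
        = ∑ j ∈ Finset.range (m+1), (m.choose j) • (Dl^[j+1] f) 0 :=
      Finset.sum_congr rfl (fun j _ => by rw [hDl j])
    have hsum : ∑ j ∈ Finset.range (m+2), ((m+1).choose j) • (Dl^[j] f) 0
        = (Dl^[0] f) 0 + (∑ j ∈ Finset.range (m+1), (m.choose j) • (Dl^[j+1] f) 0
            + ∑ j ∈ Finset.range (m+1), (m.choose (j+1)) • (Dl^[j+1] f) 0) := by
      rw [Finset.sum_range_succ' (fun j => ((m+1).choose j) • (Dl^[j] f) 0)]
      simp only [Nat.choose_succ_succ, add_smul, Nat.choose_zero_right, one_smul]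
      rw [Finset.sum_add_distrib]
      abel
    have htail : ∑ j ∈ Finset.range (m+1), (m.choose (j+1)) • (Dl^[j+1] f) 0
        = ∑ j ∈ Finset.range (m+1), (m.choose j) • (Dl^[j] f) 0 - (Dl^[0] f) 0 := by
      rw [Finset.sum_range_succ (fun j => (m.choose (j+1)) • (Dl^[j+1] f) 0)]
      rw [Nat.choose_succ_self, zero_smul, add_zero]
      have h := Finset.sum_range_succ' (fun j => (m.choose j) • (Dl^[j] f) 0) m
      rw [h, Nat.choose_zero_right, one_smul]
      abel
    rw [h2, hsum, htail]
    abel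

theorem newton1_ext (B : ℕ) (f : ℕ → A) {m : ℕ} (hm : m < B) :
    f m = ∑ j ∈ Finset.range B, (m.choose j) • (Dl^[j] f) 0 := by
  rw [newton1 m f]
  refine Finset.sum_subset ?_ ?_
  · intro j hj
    simp only [Finset.mem_range] at *
    omega
  · intro j _ hj
    simp only [Finset.mem_range, not_lt] at hj
    rw [Nat.choose_eq_zero_of_lt (by omega), zero_smul]

theorem D2_iter_row (t : ℕ) (K : ℕ → ℕ → A) (m : ℕ) :
    ∀ m', (D2^[t] K) m m' = (Dl^[t] (fun y => K m y)) m' := by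
  induction t generalizing K with
  | zero => intro m'; rfl
  | succ t ih =>
    intro m'
    rw [Function.iterate_succ_apply, Function.iterate_succ_apply]
    rw [ih (D2 K) m']
    congr 1

theorem D1_iter_col (s : ℕ) (X : ℕ → ℕ → A) (m'' : ℕ) :
    ∀ m, (D1^[s] X) m m'' = (Dl^[s] (fun x => X x m'')) m := by
  induction s generalizing X with
  | zero => intro m; rfl
  | succ s ih =>
    intro m
    rw [Function.iterate_succ_apply, Function.iterate_succ_apply]
    rw [ih (D1 X) m]
    congr 1

theorem newton2 (B : ℕ) (K : ℕ → ℕ → A) {m m' : ℕ} (hm : m < B) (hm' : m' < B) :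
    K m m' = ∑ s ∈ Finset.range B, ∑ t ∈ Finset.range B,
      ((m.choose s) * (m'.choose t)) • DD s t K 0 0 := by
  have step1 : K m m' = ∑ t ∈ Finset.range B, (m'.choose t) • (D2^[t] K) m 0 := by
    have h0 : K m m' = ∑ j ∈ Finset.range B, (m'.choose j) • (Dl^[j] (fun y => K m y)) 0 :=
      newton1_ext B (fun y => K m y) hm'
    rw [h0]
    refine Finset.sum_congr rfl fun t _ => ?_
    rw [D2_iter_row]
  rw [step1]
  have step2 : ∀ t, (D2^[t] K) m 0
      = ∑ s ∈ Finset.range B, (m.choose s) • DD s t K 0 0 := by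
    intro t
    have h0 : (D2^[t] K) m 0 = ∑ j ∈ Finset.range B, (m.choose j) • (Dl^[j] (fun x => (D2^[t] K) x 0)) 0 :=
      newton1_ext B (fun x => (D2^[t] K) x 0) hm
    rw [h0]
    refine Finset.sum_congr rfl fun s _ => ?_
    congr 1
    rw [← D1_iter_col]
    rfl
  rw [Finset.sum_congr rfl fun t _ => by rw [step2 t, Finset.smul_sum]]
  rw [Finset.sum_comm]
  refine Finset.sum_congr rfl fun s _ => Finset.sum_congr rfl fun t _ => ?_
  rw [smul_smul, mul_comm]

end Calculus


section Prof

variable {p k : ℕ}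

def starF (F G : ℕ → ℕ → A) : ℕ → ℕ → A := fun m m' => star (F m m') (G m m')

def gmu (F : ℕ → ℕ → A) : ℕ → ℕ → A := fun m m' => mu (F m m') (D1 F m m')

def gmu2 (F : ℕ → ℕ → A) : ℕ → ℕ → A := fun m m' => mu (F m m') (D2 F m m')

def trF (F : ℕ → ℕ → A) : ℕ → ℕ → A := fun m m' => F m' m

def ProfN (p k : ℕ) (N w : ℕ) (F : ℕ → ℕ → A) : Prop :=
  ∀ s t, s + t ≤ N → ∀ m m', DD s t F m m' ∈ nSet A (p ^ (w + (s+t)*k))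

def Ptw (p k : ℕ) (F : ℕ → ℕ → A) : Prop := ∀ m m', F m m' ∈ nSet A (p ^ k)

theorem profN_mono_w {N w w' : ℕ} {F : ℕ → ℕ → A} (hw : w' ≤ w) (h : ProfN p k N w F) :
    ProfN p k N w' F := fun s t hst m m' =>
  nSet_pow_mono (Nat.add_le_add_right hw _) (h s t hst m m')

theorem profN_of_le {N N' w : ℕ} {F : ℕ → ℕ → A} (hN : N' ≤ N) (h : ProfN p k N w F) :
    ProfN p k N' w F := fun s t hst m m' => h s t (le_trans hst hN) m m'

theorem profN_add {N w : ℕ} {F G : ℕ → ℕ → A} (hF : ProfN p k N w F) (hG : ProfN p k N w G) :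
    ProfN p k N w (fun m m' => F m m' + G m m') := by
  intro s t hst m m'
  rw [DD_addF]
  exact nSet_add_mem (hF s t hst m m') (hG s t hst m m')

theorem profN_zsmul {N w : ℕ} (z : ℤ) {F : ℕ → ℕ → A} (hF : ProfN p k N w F) :
    ProfN p k N w (fun m m' => z • F m m') := by
  intro s t hst m m'
  rw [DD_zsmulF]
  exact nSet_zsmul_mem z (hF s t hst m m')

theorem profN_sum {ι : Type*} {N w : ℕ} (u : Finset ι) (F : ι → ℕ → ℕ → A)
    (h : ∀ i ∈ u, ProfN p k N w (F i)) :
    ProfN p k N w (fun m m' => ∑ i ∈ u, F i m m') := by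
  intro s t hst m m'
  rw [DD_sumF]
  exact nSet_sum_mem _ _ fun i hi => h i hi s t hst m m'

theorem profN_shift1 {N w : ℕ} {F : ℕ → ℕ → A} (hF : ProfN p k N w F) :
    ProfN p k N w (shift1 F) := by
  intro s t hst m m'
  rw [DD_shift1]
  exact hF s t hst (m+1) m'

theorem profN_shift2 {N w : ℕ} {F : ℕ → ℕ → A} (hF : ProfN p k N w F) :
    ProfN p k N w (shift2 F) := by
  intro s t hst m m'
  rw [DD_shift2]
  exact hF s t hst m (m'+1)

theorem profN_D1 {N w : ℕ} {F : ℕ → ℕ → A} (hF : ProfN p k (N+1) w F) :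
    ProfN p k N (w + k) (D1 F) := by
  intro s t hst m m'
  have h := hF (s+1) t (by omega) m m'
  rw [DD_succ_left] at h
  have harith : w + (s + 1 + t) * k = w + k + (s + t) * k := by ring
  rwa [harith] at h

theorem profN_D2 {N w : ℕ} {F : ℕ → ℕ → A} (hF : ProfN p k (N+1) w F) :
    ProfN p k N (w + k) (D2 F) := by
  intro s t hst m m'
  have h := hF s (t+1) (by omega) m m'
  rw [DD_succ_right] at h
  have harith : w + (s + (t+1)) * k = w + k + (s + t) * k := by ring
  rwa [harith] at h

theorem DD_zeroF (s t : ℕ) : DD s t (fun (_ _ : ℕ) => (0 : A)) = fun _ _ => (0:A) := by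
  have h : (fun (_ _ : ℕ) => (0:A)) = fun (m m' : ℕ) => (0:ℤ) • (fun (_ _ : ℕ) => (0:A)) m m' := by
    funext; simp
  conv_lhs => rw [h]
  rw [DD_zsmulF]
  funext; simp

theorem DD_constF_zero (s t : ℕ) (c : A) (hst : s + t ≠ 0) :
    DD s t (fun (_ _ : ℕ) => c) = fun _ _ => (0:A) := by
  rcases t with _ | t
  · rcases s with _ | s
    · omega
    · rw [DD_succ_left]
      have : D1 (fun (_ _ : ℕ) => c) = fun (_ _ : ℕ) => (0:A) := by
        funext; simp [D1]
      rw [this, DD_zeroF]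
  · rw [DD_succ_right]
    have : D2 (fun (_ _ : ℕ) => c) = fun (_ _ : ℕ) => (0:A) := by
      funext; simp [D2]
    rw [this, DD_zeroF]

theorem profN_const {N : ℕ} (c : A) : ProfN p k N 0 (fun _ _ => c) := by
  intro s t hst m m'
  rcases Nat.eq_zero_or_pos (s + t) with h0 | h0
  · obtain ⟨rfl, rfl⟩ : s = 0 ∧ t = 0 := by omega
    simpa [DD] using nSet_one_mem c
  · rw [DD_constF_zero s t c (by omega)]
    exact nSet_zero_mem _

theorem profN_mul1 {x : A} (hx : x ∈ nSet A (p ^ k)) (N : ℕ) :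
    ProfN p k N 0 (fun m _ => m • x) := by
  intro s t hst m m'
  rcases t with _ | t
  · rcases s with _ | s
    · simpa [DD] using nSet_pow_zero_mem p (m • x)
    · rw [DD_succ_left]
      have hD1 : D1 (fun (m _ : ℕ) => m • x) = fun (_ _ : ℕ) => x := by
        funext a b; simp [D1, succ_nsmul]
      rw [hD1]
      rcases s with _ | s
      · simpa [DD] using hx
      · rw [DD_constF_zero _ _ x (by omega)]
        exact nSet_zero_mem _
  · rw [DD_succ_right]
    have hD2 : D2 (fun (m _ : ℕ) => m • x) = fun (_ _ : ℕ) => (0:A) := by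
      funext a b; simp [D2]
    rw [hD2, DD_zeroF]
    exact nSet_zero_mem _

theorem D1_iter_tr (s : ℕ) (F : ℕ → ℕ → A) : D1^[s] (trF F) = trF (D2^[s] F) := by
  induction s generalizing F with
  | zero => rfl
  | succ s ih =>
    rw [Function.iterate_succ_apply, Function.iterate_succ_apply]
    rw [show D1 (trF F) = trF (D2 F) from rfl, ih]

theorem D2_iter_tr (t : ℕ) (F : ℕ → ℕ → A) : D2^[t] (trF F) = trF (D1^[t] F) := by
  induction t generalizing F with
  | zero => rfl
  | succ t ih =>
    rw [Function.iterate_succ_apply, Function.iterate_succ_apply]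
    rw [show D2 (trF F) = trF (D1 F) from rfl, ih]

theorem iter_comm_D1_D2 (t s : ℕ) (F : ℕ → ℕ → A) :
    D1^[t] (D2^[s] F) = D2^[s] (D1^[t] F) := by
  induction t generalizing F with
  | zero => rfl
  | succ t ih =>
    rw [Function.iterate_succ_apply, Function.iterate_succ_apply]
    have h : D1 (D2^[s] F) = D2^[s] (D1 F) := D1_iter_D2 s F
    rw [h, ih]

theorem DD_tr (s t : ℕ) (F : ℕ → ℕ → A) : DD s t (trF F) = trF (DD t s F) := by
  simp only [DD]
  rw [D2_iter_tr, D1_iter_tr, iter_comm_D1_D2]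

theorem profN_tr {N w : ℕ} {F : ℕ → ℕ → A} (hF : ProfN p k N w F) :
    ProfN p k N w (trF F) := by
  intro s t hst m m'
  rw [DD_tr]
  have := hF t s (by omega) m' m
  rwa [show w + (t+s)*k = w + (s+t)*k by ring] at this

theorem ptw_tr {F : ℕ → ℕ → A} (hF : Ptw p k F) : Ptw p k (trF F) := fun m m' => hF m' m

theorem profN_mul2 {x : A} (hx : x ∈ nSet A (p ^ k)) (N : ℕ) :
    ProfN p k N 0 (fun _ m' => m' • x) := profN_tr (profN_mul1 hx N)

end Prof

section StarClosure

variable {p k : ℕ}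

theorem D1_star_decomp (F G : ℕ → ℕ → A) :
    D1 (starF F G) = fun m m' => starF (shift1 F) (D1 G) m m'
      + starF (gmu F) G m m' + starF F (starF (gmu F) G) m m' := by
  funext m m'
  simp only [D1, starF, shift1, gmu]
  have h1 : F m m' + (F (m+1) m' - F m m') = F (m+1) m' := by abel
  have h2 := star_add_left (F m m') (F (m+1) m' - F m m') (G m m')
  rw [h1, lam] at h2
  have h3 : star (F (m+1) m') (G (m+1) m') - star (F (m+1) m') (G m m')
      = star (F (m+1) m') (G (m+1) m' - G m m') := (star_sub _ _ _).symm
  have key : star (F (m+1) m') (G (m+1) m') - star (F m m') (G m m')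
      = (star (F (m+1) m') (G (m+1) m') - star (F (m+1) m') (G m m'))
        + (star (F (m+1) m') (G m m') - star (F m m') (G m m')) := by abel
  rw [key, h3, h2]
  abel

theorem D2_star_decomp (F G : ℕ → ℕ → A) :
    D2 (starF F G) = fun m m' => starF (shift2 F) (D2 G) m m'
      + starF (gmu2 F) G m m' + starF F (starF (gmu2 F) G) m m' := by
  funext m m'
  simp only [D2, starF, shift2, gmu2]
  have h1 : F m m' + (F m (m'+1) - F m m') = F m (m'+1) := by abel
  have h2 := star_add_left (F m m') (F m (m'+1) - F m m') (G m m')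
  rw [h1, lam] at h2
  have h3 : star (F m (m'+1)) (G m (m'+1)) - star (F m (m'+1)) (G m m')
      = star (F m (m'+1)) (G m (m'+1) - G m m') := (star_sub _ _ _).symm
  have key : star (F m (m'+1)) (G m (m'+1)) - star (F m m') (G m m')
      = (star (F m (m'+1)) (G m (m'+1)) - star (F m (m'+1)) (G m m'))
        + (star (F m (m'+1)) (G m m') - star (F m m') (G m m')) := by abel
  rw [key, h3, h2]
  abel

theorem DD_add3 (s t : ℕ) (X Y Z : ℕ → ℕ → A) :
    DD s t (fun m m' => X m m' + Y m m' + Z m m')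
    = fun m m' => DD s t X m m' + DD s t Y m m' + DD s t Z m m' := by
  have h1 : (fun (m m' : ℕ) => X m m' + Y m m' + Z m m')
      = fun (m m' : ℕ) => (fun (a b : ℕ) => X a b + Y a b) m m' + Z m m' := rfl
  rw [h1, DD_addF, DD_addF]

variable (hideal : ∀ i : ℕ, IsBraceIdeal (nSet A (p ^ i)))
variable (hk : ∀ x : A, (p ^ ((p - 1) * k)) • x = 0)
include hideal hk

theorem profN_star : ∀ N {w1 w2 : ℕ} {F G : ℕ → ℕ → A}, Ptw p k F →
    ProfN p k N w1 F → ProfN p k N w2 G → ProfN p k N (w1+w2) (starF F G) := by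
  intro N
  induction N with
  | zero =>
    intro w1 w2 F G hptw hF hG s t hst m m'
    obtain ⟨rfl, rfl⟩ : s = 0 ∧ t = 0 := by omega
    have h1 := hF 0 0 le_rfl m m'
    have h2 := hG 0 0 le_rfl m m'
    rw [show w1 + (0+0)*k = w1 from by ring] at h1
    rw [show w2 + (0+0)*k = w2 from by ring] at h2
    simpa [DD, starF] using star_mem_add hideal h1 h2
  | succ N IH =>
    intro w1 w2 F G hptw hF hG
    have branch : ∀ (F G : ℕ → ℕ → A) (w1 w2 : ℕ), Ptw p k F → ProfN p k (N+1) w1 F →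
        ProfN p k (N+1) w2 G → ∀ s' t, s' + 1 + t = N + 1 → ∀ m m',
        DD (s'+1) t (starF F G) m m' ∈ nSet A (p ^ ((w1+w2) + ((s'+1)+t)*k)) := by
      clear hptw hF hG F G w1 w2
      intro F G w1 w2 hptw hF hG s' t hst m m'
      have hstN : s' + t = N := by omega
      have hD1F : ProfN p k N (w1 + k) (D1 F) := profN_D1 hF
      have hptwD1 : ∀ a b, D1 F a b ∈ nSet A (p^k) := fun a b =>
        nSet_sub_mem (hptw _ _) (hptw _ _)
      have hSF : ∀ j, ProfN p k N (w1 + k)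
          (fun a b => (star (F a b))^[j] (D1 F a b)) := by
        intro j
        induction j with
        | zero => simpa using hD1F
        | succ j ihj =>
          have hrw : (fun a b => (star (F a b))^[j+1] (D1 F a b))
              = starF F (fun a b => (star (F a b))^[j] (D1 F a b)) := by
            funext a b
            rw [Function.iterate_succ_apply']
            rfl
          rw [hrw]
          exact profN_mono_w (by omega)
            (IH hptw (profN_of_le (Nat.le_succ N) hF) ihj)
      have hgmu : ProfN p k N (w1 + k) (gmu F) := by
        have hrw : gmu F = fun a b => ∑ j ∈ Finset.range (p-1),
            ((-1:ℤ)^j) • (star (F a b))^[j] (D1 F a b) := by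
          funext a b
          exact mu_series hideal hk (hptw a b) (D1 F a b)
        rw [hrw]
        exact profN_sum _ _ fun j _ => profN_zsmul _ (hSF j)
      have hgmu_ptw : Ptw p k (gmu F) := fun a b => mu_mem hideal _ (hptwD1 a b)
      rw [DD_succ_left, D1_star_decomp, DD_add3]
      have mem1 : DD s' t (starF (shift1 F) (D1 G)) m m'
          ∈ nSet A (p ^ ((w1 + (w2+k)) + (s'+t)*k)) :=
        IH (fun a b => hptw (a+1) b) (profN_shift1 (profN_of_le (Nat.le_succ N) hF))
          (profN_D1 hG) s' t (by omega) m m'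
      have mem2 : DD s' t (starF (gmu F) G) m m'
          ∈ nSet A (p ^ (((w1+k) + w2) + (s'+t)*k)) :=
        IH hgmu_ptw hgmu (profN_of_le (Nat.le_succ N) hG) s' t (by omega) m m'
      have mem3 : DD s' t (starF F (starF (gmu F) G)) m m'
          ∈ nSet A (p ^ ((w1 + ((w1+k) + w2)) + (s'+t)*k)) :=
        IH hptw (profN_of_le (Nat.le_succ N) hF)
          (IH hgmu_ptw hgmu (profN_of_le (Nat.le_succ N) hG)) s' t (by omega) m m'
      have mem3' : DD s' t (starF F (starF (gmu F) G)) m m'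
          ∈ nSet A (p ^ (((w1+w2) + k) + (s'+t)*k)) :=
        nSet_pow_mono (Nat.add_le_add_right (by omega) _) mem3
      rw [show (w1 + (w2+k)) + (s'+t)*k = (w1+w2) + ((s'+1)+t)*k from by ring] at mem1
      rw [show ((w1+k) + w2) + (s'+t)*k = (w1+w2) + ((s'+1)+t)*k from by ring] at mem2
      rw [show ((w1+w2) + k) + (s'+t)*k = (w1+w2) + ((s'+1)+t)*k from by ring] at mem3'
      exact nSet_add_mem (nSet_add_mem mem1 mem2) mem3'
    intro s t hst m m'
    by_cases hle : s + t ≤ N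
    · exact IH hptw (profN_of_le (Nat.le_succ N) hF) (profN_of_le (Nat.le_succ N) hG) s t hle m m'
    · rcases s with _ | s'
      · rcases t with _ | t''
        · omega
        · have htr : DD 0 (t''+1) (starF F G) m m' = DD (t''+1) 0 (starF (trF F) (trF G)) m' m := by
            have h1 : starF (trF F) (trF G) = trF (starF F G) := rfl
            rw [h1, DD_tr]
            rfl
          rw [htr]
          have hb := branch (trF F) (trF G) w1 w2 (ptw_tr hptw) (profN_tr hF) (profN_tr hG)
            t'' 0 (by omega) m' m
          rwa [show (w1+w2) + ((t''+1)+0)*k = (w1+w2) + ((0+(t''+1))*k) from by ring] at hb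
      · have hb := branch F G w1 w2 hptw hF hG s' t (by omega) m m'
        exact hb

end StarClosure

section Arith

variable {p n : ℕ} {ξ : ℤ}

theorem geom_vanish (hp : 2 ≤ p)
    (hξ1 : ξ ^ (p - 1) ≡ 1 [ZMOD (p ^ n)])
    (hξ2 : ∀ j : ℕ, 0 < j → j < p - 1 → ¬ (ξ ^ j ≡ 1 [ZMOD p]))
    (hpp : Prime (p : ℤ))
    {d : ℕ} (hd1 : 0 < d) (hd2 : d < p - 1) :
    ((p : ℤ) ^ n) ∣ ∑ i ∈ Finset.range (p - 1), (ξ ^ d) ^ i := by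
  have hdvd1 : ((p : ℤ) ^ n) ∣ (ξ ^ d) ^ (p - 1) - 1 := by
    have hxy : (ξ ^ d) ^ (p - 1) = (ξ ^ (p - 1)) ^ d := by
      rw [← pow_mul, ← pow_mul, mul_comm]
    rw [hxy]
    have h := hξ1.pow d
    rw [one_pow] at h
    have h2 := Int.ModEq.dvd h
    -- h2 : ↑(p^n) ∣ 1 - (ξ^(p-1))^d  (or the other way); use dvd_sub-symmetry
    have h3 := (Int.modEq_iff_dvd.mp h.symm)
    -- h3 : ↑(p^n) ∣ (ξ^(p-1))^d - 1
    push_cast at h3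
    exact_mod_cast h3
  have hgeom := geom_sum_mul (ξ ^ d) (p - 1)
  have hndvd : ¬ ((p : ℤ) ∣ (ξ ^ d - 1)) := by
    intro hdvd
    apply hξ2 d hd1 hd2
    have h4 : (p : ℤ) ∣ 1 - ξ ^ d := by
      have := dvd_neg.mpr hdvd
      rwa [neg_sub] at this
    exact Int.modEq_iff_dvd.mpr h4
  have hcop : IsCoprime ((p : ℤ) ^ n) (ξ ^ d - 1) :=
    (hpp.coprime_iff_not_dvd.mpr hndvd).pow_left
  have hmul : ((p : ℤ) ^ n) ∣ (∑ i ∈ Finset.range (p - 1), (ξ ^ d) ^ i) * (ξ ^ d - 1) := by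
    rw [hgeom]; exact hdvd1
  exact hcop.dvd_of_dvd_mul_right hmul

theorem tau0_vanish (hp : 3 ≤ p)
    (hξ1 : ξ ^ (p - 1) ≡ 1 [ZMOD (p ^ n)])
    (hξ2 : ∀ j : ℕ, 0 < j → j < p - 1 → ¬ (ξ ^ j ≡ 1 [ZMOD p]))
    (hpp : Prime (p : ℤ)) :
    ((p : ℤ) ^ n) ∣ ∑ i ∈ Finset.range (p - 1), ξ ^ (p - 1 - i) := by
  have hre := Finset.sum_range_reflect (fun j => ξ ^ (j + 1)) (p - 1)
  -- hre : ∑ j in range (p-1), ξ^((p-1) - 1 - j + 1) = ∑ j in range (p-1), ξ^(j+1)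
  have hl : ∑ i ∈ Finset.range (p - 1), ξ ^ (p - 1 - i)
      = ∑ j ∈ Finset.range (p - 1), ξ ^ (j + 1) := by
    rw [← hre]
    refine Finset.sum_congr rfl fun i hi => ?_
    simp only [Finset.mem_range] at hi
    congr 1
    omega
  rw [hl]
  have h2 : ∑ j ∈ Finset.range (p - 1), ξ ^ (j + 1)
      = ξ * ∑ j ∈ Finset.range (p - 1), (ξ ^ 1) ^ j := by
    rw [Finset.mul_sum]
    refine Finset.sum_congr rfl fun j _ => ?_
    rw [pow_one, pow_succ]
    ring
  rw [h2]
  exact Dvd.dvd.mul_left (geom_vanish (by omega) hξ1 hξ2 hpp (by omega) (by omega)) ξ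

theorem descFactorial_cast_prod (m s : ℕ) :
    ((m.descFactorial s : ℕ) : ℤ) = ∏ r ∈ Finset.range s, ((m : ℤ) - r) := by
  induction s with
  | zero => simp
  | succ s ih =>
    rw [Nat.descFactorial_succ, Finset.prod_range_succ, ← ih]
    rcases le_or_gt s m with h | h
    · push_cast [h]
      ring
    · rw [Nat.descFactorial_eq_zero_iff_lt.mpr h]
      simp

theorem prod_modEq {N : ℤ} {a b : ℤ} (h : a ≡ b [ZMOD N]) (s : ℕ) :
    (∏ r ∈ Finset.range s, (a - r)) ≡ (∏ r ∈ Finset.range s, (b - r)) [ZMOD N] := by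
  induction s with
  | zero => rfl
  | succ s ih =>
    rw [Finset.prod_range_succ, Finset.prod_range_succ]
    exact ih.mul (h.sub_right _)

theorem prod_range_shift (x : ℤ) (s : ℕ) :
    ∏ r ∈ Finset.range (s + 1), (x - r) = (∏ r ∈ Finset.range s, (x - (r + 1))) * x := by
  have := Finset.prod_range_succ' (fun r => x - (r : ℤ)) s
  simpa using this

end Arith

section Arith2

variable {p n : ℕ} {ξ : ℤ}

theorem polysum_vanish
    (hξ1 : ξ ^ (p - 1) ≡ 1 [ZMOD (p ^ n)])
    (hξ2 : ∀ j : ℕ, 0 < j → j < p - 1 → ¬ (ξ ^ j ≡ 1 [ZMOD p]))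
    (hpp : Prime (p : ℤ))
    (Q : Polynomial ℤ) (hQ : Q.natDegree < p - 3) :
    ((p : ℤ) ^ n) ∣ ∑ i ∈ Finset.range (p - 1), ξ ^ (p - 1 - i) * ((ξ ^ i) ^ 2 * Q.eval (ξ ^ i)) := by
  have heval : ∀ x : ℤ, Q.eval x = ∑ e ∈ Finset.range (p - 3), Q.coeff e * x ^ e := fun x =>
    Polynomial.eval_eq_sum_range' hQ x
  have hterm : ∀ i ∈ Finset.range (p - 1),
      ξ ^ (p - 1 - i) * ((ξ ^ i) ^ 2 * Q.eval (ξ ^ i))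
      = ∑ e ∈ Finset.range (p - 3), Q.coeff e * (ξ ^ (p - 1) * (ξ ^ (e + 1)) ^ i) := by
    intro i hi
    simp only [Finset.mem_range] at hi
    rw [heval (ξ ^ i), Finset.mul_sum, Finset.mul_sum]
    refine Finset.sum_congr rfl fun e _ => ?_
    have h1 : ξ ^ (p - 1 - i) * ξ ^ i = ξ ^ (p - 1) := by
      rw [← pow_add, Nat.sub_add_cancel (by omega)]
    have h2 : (ξ ^ i) ^ (e + 1) = (ξ ^ (e + 1)) ^ i := by
      rw [← pow_mul, ← pow_mul, mul_comm]
    calc ξ ^ (p - 1 - i) * ((ξ ^ i) ^ 2 * (Q.coeff e * (ξ ^ i) ^ e))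
        = Q.coeff e * ((ξ ^ (p - 1 - i) * ξ ^ i) * (ξ ^ i) ^ (e + 1)) := by ring
      _ = Q.coeff e * (ξ ^ (p - 1) * (ξ ^ (e + 1)) ^ i) := by rw [h1, h2]
  rw [Finset.sum_congr rfl hterm, Finset.sum_comm]
  refine Finset.dvd_sum fun e he => ?_
  simp only [Finset.mem_range] at he
  have hgeom := geom_vanish (p := p) (n := n) (by omega) hξ1 hξ2 hpp (d := e + 1)
    (by omega) (by omega)
  have hrw : ∑ i ∈ Finset.range (p - 1), Q.coeff e * (ξ ^ (p - 1) * (ξ ^ (e + 1)) ^ i)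
      = Q.coeff e * ξ ^ (p - 1) * ∑ i ∈ Finset.range (p - 1), (ξ ^ (e + 1)) ^ i := by
    rw [Finset.mul_sum]
    refine Finset.sum_congr rfl fun i _ => by ring
  rw [hrw]
  exact Dvd.dvd.mul_left hgeom _

theorem rho_vanish (hp : p.Prime)
    (hξ1 : ξ ^ (p - 1) ≡ 1 [ZMOD (p ^ n)])
    (hξ2 : ∀ j : ℕ, 0 < j → j < p - 1 → ¬ (ξ ^ j ≡ 1 [ZMOD p]))
    {s t : ℕ} (hs : 1 ≤ s) (ht : 1 ≤ t) (hst : s + t ≤ p - 2)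
    (mr : ℕ → ℕ) (hmr : ∀ i, ((mr i : ℤ)) ≡ ξ ^ i [ZMOD (p ^ n)]) :
    ((p : ℤ) ^ n) ∣ ∑ i ∈ Finset.range (p - 1),
      ξ ^ (p - 1 - i) * (((mr i).choose s * (mr i).choose t : ℕ) : ℤ) := by
  have hp2 : 2 ≤ p := hp.two_le
  have hp4 : 4 ≤ p := by omega
  have hpp : Prime (p : ℤ) := Nat.prime_iff_prime_int.mp hp
  obtain ⟨s₀, rfl⟩ : ∃ s₀, s = s₀ + 1 := ⟨s - 1, by omega⟩
  obtain ⟨t₀, rfl⟩ : ∃ t₀, t = t₀ + 1 := ⟨t - 1, by omega⟩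
  set Fac : ℤ := (((s₀+1).factorial * (t₀+1).factorial : ℕ) : ℤ) with hFac
  have hterm : ∀ i, Fac * (ξ ^ (p - 1 - i) * (((mr i).choose (s₀+1) * (mr i).choose (t₀+1) : ℕ) : ℤ))
      = ξ ^ (p - 1 - i) * ((((mr i).descFactorial (s₀+1) : ℕ) : ℤ)
          * (((mr i).descFactorial (t₀+1) : ℕ) : ℤ)) := by
    intro i
    rw [hFac]
    push_cast [Nat.descFactorial_eq_factorial_mul_choose]
    ring
  set Xterm : ℕ → ℤ := fun i => ξ ^ (p - 1 - i) *
    ((∏ r ∈ Finset.range (s₀+1), (ξ ^ i - r)) * (∏ r ∈ Finset.range (t₀+1), (ξ ^ i - r)))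
    with hXterm
  have hcong : ∀ i, ((p : ℤ) ^ n) ∣
      (ξ ^ (p - 1 - i) * ((((mr i).descFactorial (s₀+1) : ℕ) : ℤ)
        * (((mr i).descFactorial (t₀+1) : ℕ) : ℤ)) - Xterm i) := by
    intro i
    have h1 : (((mr i).descFactorial (s₀+1) : ℕ) : ℤ)
        ≡ (∏ r ∈ Finset.range (s₀+1), (ξ ^ i - r)) [ZMOD (p ^ n)] := by
      rw [descFactorial_cast_prod]
      exact prod_modEq (hmr i) (s₀+1)
    have h2 : (((mr i).descFactorial (t₀+1) : ℕ) : ℤ)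
        ≡ (∏ r ∈ Finset.range (t₀+1), (ξ ^ i - r)) [ZMOD (p ^ n)] := by
      rw [descFactorial_cast_prod]
      exact prod_modEq (hmr i) (t₀+1)
    have h3 := ((h1.mul h2).mul_left (ξ ^ (p - 1 - i))).symm.dvd
    rw [hXterm]
    exact_mod_cast h3
  have hX : ((p : ℤ) ^ n) ∣ ∑ i ∈ Finset.range (p - 1), Xterm i := by
    set Q : Polynomial ℤ :=
      (∏ r ∈ Finset.range s₀, (Polynomial.X - Polynomial.C ((r : ℤ) + 1)))
      * (∏ r ∈ Finset.range t₀, (Polynomial.X - Polynomial.C ((r : ℤ) + 1))) with hQdef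
    have hd1 : ∀ (u : ℕ),
        (∏ r ∈ Finset.range u, (Polynomial.X - Polynomial.C ((r : ℤ) + 1))).natDegree ≤ u := by
      intro u
      refine le_trans (Polynomial.natDegree_prod_le _ _) ?_
      have hb : ∀ r ∈ Finset.range u,
          (Polynomial.X - Polynomial.C ((r : ℤ) + 1)).natDegree ≤ 1 :=
        fun r _ => le_of_eq (Polynomial.natDegree_X_sub_C _)
      have hs := Finset.sum_le_sum hb
      simpa using hs
    have hdeg : Q.natDegree < p - 3 := by
      have := Polynomial.natDegree_mul_le (p := (∏ r ∈ Finset.range s₀,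
        (Polynomial.X - Polynomial.C ((r : ℤ) + 1)))) (q := (∏ r ∈ Finset.range t₀,
        (Polynomial.X - Polynomial.C ((r : ℤ) + 1))))
      have h2 := add_le_add (hd1 s₀) (hd1 t₀)
      have h3 : Q.natDegree ≤ s₀ + t₀ := le_trans this h2
      omega
    have hXq : ∀ i ∈ Finset.range (p-1), Xterm i
        = ξ ^ (p - 1 - i) * ((ξ ^ i) ^ 2 * Q.eval (ξ ^ i)) := by
      intro i _
      simp only [hXterm]
      have e1 := prod_range_shift (ξ ^ i) s₀
      have e2 := prod_range_shift (ξ ^ i) t₀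
      rw [e1, e2, hQdef]
      simp only [Polynomial.eval_mul, Polynomial.eval_prod, Polynomial.eval_sub,
        Polynomial.eval_X, Polynomial.eval_C]
      push_cast
      ring
    rw [Finset.sum_congr rfl hXq]
    exact polysum_vanish hξ1 hξ2 hpp Q hdeg
  have hFacSum : ((p : ℤ) ^ n) ∣ Fac * ∑ i ∈ Finset.range (p - 1),
      ξ ^ (p - 1 - i) * (((mr i).choose (s₀+1) * (mr i).choose (t₀+1) : ℕ) : ℤ) := by
    rw [Finset.mul_sum, Finset.sum_congr rfl (fun i _ => hterm i)]
    have hsplit : ∑ i ∈ Finset.range (p - 1),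
        ξ ^ (p - 1 - i) * ((((mr i).descFactorial (s₀+1) : ℕ) : ℤ)
          * (((mr i).descFactorial (t₀+1) : ℕ) : ℤ))
        = (∑ i ∈ Finset.range (p - 1), Xterm i)
          + ∑ i ∈ Finset.range (p - 1),
            (ξ ^ (p - 1 - i) * ((((mr i).descFactorial (s₀+1) : ℕ) : ℤ)
              * (((mr i).descFactorial (t₀+1) : ℕ) : ℤ)) - Xterm i) := by
      rw [← Finset.sum_add_distrib]
      refine Finset.sum_congr rfl fun i _ => by ring
    rw [hsplit]
    exact dvd_add hX (Finset.dvd_sum fun i _ => hcong i)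
  have hndvd : ¬ ((p : ℤ) ∣ Fac) := by
    rw [hFac]
    rw [Int.natCast_dvd_natCast]
    intro hdvd
    rcases (Nat.Prime.dvd_mul hp).mp hdvd with h | h
    · have := (Nat.Prime.dvd_factorial hp).mp h; omega
    · have := (Nat.Prime.dvd_factorial hp).mp h; omega
  have hcop : IsCoprime ((p : ℤ) ^ n) Fac := (hpp.coprime_iff_not_dvd.mpr hndvd).pow_left
  exact hcop.dvd_of_dvd_mul_left hFacSum

end Arith2

section Torsion

variable {p n k : ℕ} {ξ : ℤ}

theorem torsion_all (hcard : Nat.card A = p ^ n) (x : A) : (p ^ n : ℕ) • x = 0 := by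
  rw [← hcard]; exact card_nsmul_eq_zero'

theorem zsmul_eq_zero_of_dvd (htor : ∀ x : A, (p ^ n : ℕ) • x = 0) {z : ℤ}
    (hz : ((p : ℤ) ^ n) ∣ z) (x : A) : z • x = 0 := by
  obtain ⟨q, rfl⟩ := hz
  rw [mul_smul]
  have h1 : ((p : ℤ) ^ n) = ((p ^ n : ℕ) : ℤ) := by push_cast; ring
  rw [h1, natCast_zsmul, htor]

theorem zsmul_congr (htor : ∀ x : A, (p ^ n : ℕ) • x = 0) {z z' : ℤ}
    (h : ((p : ℤ) ^ n) ∣ (z - z')) (x : A) : z • x = z' • x := by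
  have h2 := zsmul_eq_zero_of_dvd htor h x
  rw [sub_smul] at h2
  exact sub_eq_zero.mp h2

def mrep (p n : ℕ) (ξ : ℤ) (i : ℕ) : ℕ := ((ξ ^ i) % ((p : ℤ) ^ n)).toNat

theorem mrep_lt (hpn : 0 < p) (i : ℕ) : mrep p n ξ i < p ^ n := by
  have hpos : (0 : ℤ) < (p : ℤ) ^ n := by positivity
  have h1 : 0 ≤ (ξ ^ i) % ((p : ℤ) ^ n) := Int.emod_nonneg _ (ne_of_gt hpos)
  have h2 : (ξ ^ i) % ((p : ℤ) ^ n) < (p : ℤ) ^ n := Int.emod_lt_of_pos _ hpos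
  have h3 : ((mrep p n ξ i : ℕ) : ℤ) = (ξ ^ i) % ((p : ℤ) ^ n) := Int.toNat_of_nonneg h1
  have h4 : ((mrep p n ξ i : ℕ) : ℤ) < ((p ^ n : ℕ) : ℤ) := by
    rw [h3]; push_cast; exact h2
  exact_mod_cast h4

theorem mrep_modEq (hpn : 0 < p) (i : ℕ) :
    ((mrep p n ξ i : ℕ) : ℤ) ≡ ξ ^ i [ZMOD (p ^ n)] := by
  have hpos : (0 : ℤ) < (p : ℤ) ^ n := by positivity
  have h1 : ((mrep p n ξ i : ℕ) : ℤ) = (ξ ^ i) % ((p : ℤ) ^ n) :=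
    Int.toNat_of_nonneg (Int.emod_nonneg _ (ne_of_gt hpos))
  rw [h1]
  exact Int.emod_emod_of_dvd _ dvd_rfl

theorem mrep_smul (htor : ∀ x : A, (p ^ n : ℕ) • x = 0) (hpn : 0 < p) (i : ℕ) (x : A) :
    (ξ ^ i) • x = (mrep p n ξ i) • x := by
  have h := mrep_modEq (p := p) (n := n) (ξ := ξ) hpn i
  have hd : ((p : ℤ) ^ n) ∣ (ξ ^ i - (mrep p n ξ i : ℤ)) := h.dvd
  have h2 := zsmul_congr htor hd x
  rw [h2, natCast_zsmul]

end Torsion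

section DV

variable {p n k : ℕ} {ξ : ℤ}
variable (hp : p.Prime)
variable (hξ1 : ξ ^ (p - 1) ≡ 1 [ZMOD (p ^ n)])
variable (hξ2 : ∀ j : ℕ, 0 < j → j < p - 1 → ¬ (ξ ^ j ≡ 1 [ZMOD p]))
variable (hideal : ∀ i : ℕ, IsBraceIdeal (nSet A (p ^ i)))
variable (hk : ∀ x : A, (p ^ ((p - 1) * k)) • x = 0)
variable (htor : ∀ x : A, (p ^ n : ℕ) • x = 0)
include hp hξ1 hξ2 hideal hk htor

theorem DV2 (K : ℕ → ℕ → A)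
    (hb1 : ∀ m, K m 0 = 0) (hb2 : ∀ m', K 0 m' = 0)
    (hd : ∀ s t, DD s t K 0 0 ∈ nSet A (p ^ ((s + t) * k))) :
    ∑ i ∈ Finset.range (p - 1),
      (ξ ^ (p - 1 - i)) • K (mrep p n ξ i) (mrep p n ξ i) = 0 := by
  have key : ∀ s t : ℕ,
      (∑ i ∈ Finset.range (p - 1),
        ξ ^ (p - 1 - i) * (((mrep p n ξ i).choose s * (mrep p n ξ i).choose t : ℕ) : ℤ))
        • DD s t K 0 0 = 0 := by
    intro s t
    rcases Nat.eq_zero_or_pos s with rfl | hs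
    · rw [DD_border_right hb2 0 t rfl, smul_zero]
    rcases Nat.eq_zero_or_pos t with rfl | ht
    · rw [DD_border_left hb1 s, smul_zero]
    by_cases hbig : p - 1 ≤ s + t
    · rw [nSet_big_eq_zero hideal hk hbig (hd s t), smul_zero]
    · have hsum := rho_vanish hp hξ1 hξ2 hs ht (by omega) (mrep p n ξ)
        (fun i => mrep_modEq hp.pos i)
      exact zsmul_eq_zero_of_dvd htor hsum _
  have hper : ∀ i ∈ Finset.range (p - 1), (ξ ^ (p - 1 - i)) • K (mrep p n ξ i) (mrep p n ξ i)
      = ∑ s ∈ Finset.range (p ^ n), ∑ t ∈ Finset.range (p ^ n),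
          (ξ ^ (p - 1 - i) * (((mrep p n ξ i).choose s * (mrep p n ξ i).choose t : ℕ) : ℤ))
            • DD s t K 0 0 := by
    intro i _
    rw [newton2 (p ^ n) K (mrep_lt hp.pos i) (mrep_lt hp.pos i), Finset.smul_sum]
    refine Finset.sum_congr rfl fun s _ => ?_
    rw [Finset.smul_sum]
    refine Finset.sum_congr rfl fun t _ => ?_
    rw [← natCast_zsmul (DD s t K 0 0), smul_smul]
  rw [Finset.sum_congr rfl hper, Finset.sum_comm]
  have hswap : ∀ s ∈ Finset.range (p ^ n),
      (∑ i ∈ Finset.range (p - 1), ∑ t ∈ Finset.range (p ^ n),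
        (ξ ^ (p - 1 - i) * (((mrep p n ξ i).choose s * (mrep p n ξ i).choose t : ℕ) : ℤ))
          • DD s t K 0 0)
      = ∑ t ∈ Finset.range (p ^ n),
          (∑ i ∈ Finset.range (p - 1),
            ξ ^ (p - 1 - i) * (((mrep p n ξ i).choose s * (mrep p n ξ i).choose t : ℕ) : ℤ))
            • DD s t K 0 0 := by
    intro s _
    rw [Finset.sum_comm]
    refine Finset.sum_congr rfl fun t _ => ?_
    rw [Finset.sum_smul]
  rw [Finset.sum_congr rfl hswap]
  rw [Finset.sum_congr rfl (fun s _ => Finset.sum_congr rfl (fun t _ => key s t))]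
  simp

end DV

section Dot

variable {p n k : ℕ} {ξ : ℤ}

theorem dot_rw (htor : ∀ x : A, (p ^ n : ℕ) • x = 0) (hpn : 0 < p) (x c : A) :
    dotOp p ξ x c
      = ∑ i ∈ Finset.range (p - 1), (ξ ^ (p - 1 - i)) • star ((mrep p n ξ i) • x) c := by
  unfold dotOp
  refine Finset.sum_congr rfl fun i _ => ?_
  rw [mrep_smul htor hpn i x]

theorem dot_zero_left (c : A) : dotOp p ξ 0 c = 0 := by
  unfold dotOp
  simp [zero_star]

theorem dot_add_right (a b c : A) : dotOp p ξ a (b + c) = dotOp p ξ a b + dotOp p ξ a c := by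
  unfold dotOp
  rw [← Finset.sum_add_distrib]
  exact Finset.sum_congr rfl fun i _ => by rw [star_add, smul_add]

theorem dot_mem (hideal : ∀ i : ℕ, IsBraceIdeal (nSet A (p ^ i))) {j : ℕ} {x : A}
    (hx : x ∈ nSet A (p ^ j)) (c : A) : dotOp p ξ x c ∈ nSet A (p ^ j) := by
  unfold dotOp
  exact nSet_sum_mem _ _ fun i _ =>
    nSet_zsmul_mem _ (star_mem_left hideal (nSet_zsmul_mem _ hx) c)

variable (hp : p.Prime)
variable (hξ1 : ξ ^ (p - 1) ≡ 1 [ZMOD (p ^ n)])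
variable (hξ2 : ∀ j : ℕ, 0 < j → j < p - 1 → ¬ (ξ ^ j ≡ 1 [ZMOD p]))
variable (hideal : ∀ i : ℕ, IsBraceIdeal (nSet A (p ^ i)))
variable (hk : ∀ x : A, (p ^ ((p - 1) * k)) • x = 0)
variable (htor : ∀ x : A, (p ^ n : ℕ) • x = 0)
include hp hξ1 hξ2 hideal hk htor

theorem dot_add_left {a b : A} (ha : a ∈ nSet A (p ^ k)) (hb : b ∈ nSet A (p ^ k)) (c : A) :
    dotOp p ξ (a + b) c = dotOp p ξ a c + dotOp p ξ b c := by
  set K : ℕ → ℕ → A :=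
    fun m m' => star (m • a + m' • b) c - star (m • a) c - star (m' • b) c with hK
  have hb1 : ∀ m, K m 0 = 0 := by
    intro m; simp [hK, zero_star]
  have hb2 : ∀ m', K 0 m' = 0 := by
    intro m'; simp [hK, zero_star]
  have hdata : ∀ s t, DD s t K 0 0 ∈ nSet A (p ^ ((s + t) * k)) := by
    intro s t
    set N := s + t with hN
    have hptwF : Ptw p k (fun m m' => m • a + m' • b) :=
      fun m m' => nSet_add_mem (nSet_nsmul_mem _ ha) (nSet_nsmul_mem _ hb)
    have hproF : ProfN p k N 0 (fun m m' => m • a + m' • b) :=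
      profN_add (profN_mul1 ha N) (profN_mul2 hb N)
    have hconst : ProfN p k N 0 (fun _ _ => c) := profN_const c
    have h1 := profN_star hideal hk N hptwF hproF hconst
    have hptw1 : Ptw p k (fun m (_ : ℕ) => m • a) := fun m _ => nSet_nsmul_mem _ ha
    have hptw2 : Ptw p k (fun (_ : ℕ) m' => m' • b) := fun _ m' => nSet_nsmul_mem _ hb
    have h2 := profN_star hideal hk N hptw1 (profN_mul1 ha N) hconst
    have h3 := profN_star hideal hk N hptw2 (profN_mul2 hb N) hconst
    have hKeq : K = fun m m' => starF (fun m m' => m • a + m' • b) (fun _ _ => c) m m'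
        + ((-1 : ℤ) • starF (fun m (_ : ℕ) => m • a) (fun _ _ => c) m m'
          + (-1 : ℤ) • starF (fun (_ : ℕ) m' => m' • b) (fun _ _ => c) m m') := by
      funext m m'
      simp only [hK, starF, neg_smul, one_smul]
      abel
    rw [hKeq]
    have hfin := profN_add h1 (profN_add (profN_zsmul (-1) h2) (profN_zsmul (-1) h3))
    have hres := hfin s t (le_of_eq hN.symm) 0 0
    simpa using hres
  have hDV := DV2 hp hξ1 hξ2 hideal hk htor K hb1 hb2 hdata
  have hsplit : dotOp p ξ (a + b) c - dotOp p ξ a c - dotOp p ξ b c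
      = ∑ i ∈ Finset.range (p - 1), (ξ ^ (p - 1 - i)) • K (mrep p n ξ i) (mrep p n ξ i) := by
    rw [dot_rw htor hp.pos (a+b) c, dot_rw htor hp.pos a c, dot_rw htor hp.pos b c]
    rw [← Finset.sum_sub_distrib, ← Finset.sum_sub_distrib]
    refine Finset.sum_congr rfl fun i _ => ?_
    simp only [hK, smul_add, smul_sub]
  have h0 : dotOp p ξ (a + b) c - dotOp p ξ a c - dotOp p ξ b c = 0 := hsplit.trans hDV
  rw [sub_sub, sub_eq_zero] at h0
  exact h0

theorem dot_neg_left {x : A} (hx : x ∈ nSet A (p ^ k)) (c : A) :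
    dotOp p ξ (-x) c = - dotOp p ξ x c := by
  have h := dot_add_left hp hξ1 hξ2 hideal hk htor hx (nSet_neg_mem hx) c
  rw [add_neg_cancel, dot_zero_left] at h
  exact (neg_eq_of_add_eq_zero_right h.symm).symm

theorem dot_sum_left {ι : Type*} (u : Finset ι) (f : ι → A)
    (hf : ∀ i ∈ u, f i ∈ nSet A (p ^ k)) (c : A) :
    dotOp p ξ (∑ i ∈ u, f i) c = ∑ i ∈ u, dotOp p ξ (f i) c := by
  classical
  induction u using Finset.induction_on with
  | empty => simp [dot_zero_left]
  | insert _ _ hni ih =>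
    rename_i a' u'
    rw [Finset.sum_insert hni, Finset.sum_insert hni]
    rw [dot_add_left hp hξ1 hξ2 hideal hk htor (hf _ (Finset.mem_insert_self _ _))
      (nSet_sum_mem _ _ fun i hi => hf i (Finset.mem_insert_of_mem hi)) c]
    rw [ih (fun i hi => hf i (Finset.mem_insert_of_mem hi))]

theorem dot_nsmul_left {x : A} (hx : x ∈ nSet A (p ^ k)) (m : ℕ) (c : A) :
    dotOp p ξ (m • x) c = m • dotOp p ξ x c := by
  induction m with
  | zero => simp [dot_zero_left]
  | succ m ih =>
    rw [succ_nsmul, succ_nsmul,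
      dot_add_left hp hξ1 hξ2 hideal hk htor (nSet_nsmul_mem m hx) hx c, ih]

theorem dot_zsmul_left {x : A} (hx : x ∈ nSet A (p ^ k)) (z : ℤ) (c : A) :
    dotOp p ξ (z • x) c = z • dotOp p ξ x c := by
  rcases z with m | m
  · rw [Int.ofNat_eq_coe, natCast_zsmul, natCast_zsmul]
    exact dot_nsmul_left hp hξ1 hξ2 hideal hk htor hx m c
  · rw [negSucc_zsmul, negSucc_zsmul]
    rw [dot_neg_left hp hξ1 hξ2 hideal hk htor (nSet_nsmul_mem _ hx) c]
    rw [dot_nsmul_left hp hξ1 hξ2 hideal hk htor hx (m+1) c]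

theorem dot_sub_left {x y : A} (hx : x ∈ nSet A (p ^ k)) (hy : y ∈ nSet A (p ^ k)) (c : A) :
    dotOp p ξ (x - y) c = dotOp p ξ x c - dotOp p ξ y c := by
  rw [sub_eq_add_neg, dot_add_left hp hξ1 hξ2 hideal hk htor hx (nSet_neg_mem hy) c,
    dot_neg_left hp hξ1 hξ2 hideal hk htor hy c, sub_eq_add_neg]

end Dot

section PreLie

variable {p n k : ℕ} {ξ : ℤ}
variable (hp : p.Prime) (hp3 : 3 ≤ p)
variable (hξ1 : ξ ^ (p - 1) ≡ 1 [ZMOD (p ^ n)])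
variable (hξ2 : ∀ j : ℕ, 0 < j → j < p - 1 → ¬ (ξ ^ j ≡ 1 [ZMOD p]))
variable (hideal : ∀ i : ℕ, IsBraceIdeal (nSet A (p ^ i)))
variable (hk : ∀ x : A, (p ^ ((p - 1) * k)) • x = 0)
variable (htor : ∀ x : A, (p ^ n : ℕ) • x = 0)
include hp hp3 hξ1 hξ2 htor

theorem sum_xi_smul (v : A) :
    ∑ i ∈ Finset.range (p - 1), (ξ ^ (p - 1 - i)) • v = 0 := by
  rw [← Finset.sum_smul]
  exact zsmul_eq_zero_of_dvd htor
    (tau0_vanish hp3 hξ1 hξ2 (Nat.prime_iff_prime_int.mp hp)) v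

theorem E_avg (u' v' c : A) :
    ∑ j ∈ Finset.range (p - 1), (ξ ^ (p - 1 - j)) • star ((mrep p n ξ j) • u' + v') c
    = lam v' (dotOp p ξ (mu v' u') c) := by
  have hterm : ∀ j ∈ Finset.range (p - 1),
      (ξ ^ (p - 1 - j)) • star ((mrep p n ξ j) • u' + v') c
      = (ξ ^ (p - 1 - j)) • star v' c
        + (ξ ^ (p - 1 - j)) • lam v' (star ((mrep p n ξ j) • mu v' u') c) := by
    intro j _
    rw [add_comm ((mrep p n ξ j) • u') v', star_add_left, mu_nsmul, smul_add]
  rw [Finset.sum_congr rfl hterm, Finset.sum_add_distrib,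
    sum_xi_smul hp hp3 hξ1 hξ2 htor, zero_add]
  have h2 : ∑ j ∈ Finset.range (p - 1),
      (ξ ^ (p - 1 - j)) • lam v' (star ((mrep p n ξ j) • mu v' u') c)
      = lam v' (∑ j ∈ Finset.range (p - 1),
          (ξ ^ (p - 1 - j)) • star ((mrep p n ξ j) • mu v' u') c) := by
    rw [← lamHom_apply, map_sum]
    exact Finset.sum_congr rfl fun j _ => by rw [map_zsmul, lamHom_apply]
  rw [h2, ← dot_rw htor hp.pos]

theorem dot_dot_right (u v c : A) :
    dotOp p ξ u (dotOp p ξ v c)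
    = ∑ i ∈ Finset.range (p - 1), ∑ j ∈ Finset.range (p - 1),
        (ξ ^ (p - 1 - i) * ξ ^ (p - 1 - j))
          • star (circ ((mrep p n ξ i) • u) ((mrep p n ξ j) • v)) c := by
  have hXiW : ∀ i, star ((mrep p n ξ i) • u) (dotOp p ξ v c)
      = (∑ j ∈ Finset.range (p - 1), (ξ ^ (p - 1 - j))
          • star (circ ((mrep p n ξ i) • u) ((mrep p n ξ j) • v)) c)
        - dotOp p ξ v c := by
    intro i
    have h1 : star ((mrep p n ξ i) • u) (dotOp p ξ v c)
        = ∑ j ∈ Finset.range (p - 1), (ξ ^ (p - 1 - j))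
            • star ((mrep p n ξ i) • u) (star ((mrep p n ξ j) • v) c) := by
      rw [dot_rw htor hp.pos v c, ← starHom_apply, map_sum]
      exact Finset.sum_congr rfl fun j _ => by rw [map_zsmul, starHom_apply]
    have h2 : ∀ j ∈ Finset.range (p - 1),
        (ξ ^ (p - 1 - j)) • star ((mrep p n ξ i) • u) (star ((mrep p n ξ j) • v) c)
        = (ξ ^ (p - 1 - j)) • star (circ ((mrep p n ξ i) • u) ((mrep p n ξ j) • v)) c
          - (ξ ^ (p - 1 - j)) • star ((mrep p n ξ i) • u) c
          - (ξ ^ (p - 1 - j)) • star ((mrep p n ξ j) • v) c := by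
      intro j _
      rw [show star ((mrep p n ξ i) • u) (star ((mrep p n ξ j) • v) c)
          = star (circ ((mrep p n ξ i) • u) ((mrep p n ξ j) • v)) c
            - star ((mrep p n ξ i) • u) c - star ((mrep p n ξ j) • v) c
        from by rw [star_circ]; abel]
      rw [smul_sub, smul_sub]
    rw [h1, Finset.sum_congr rfl h2, Finset.sum_sub_distrib, Finset.sum_sub_distrib]
    rw [show ∑ j ∈ Finset.range (p - 1), (ξ ^ (p - 1 - j)) • star ((mrep p n ξ i) • u) c = 0
      from sum_xi_smul hp hp3 hξ1 hξ2 htor _]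
    rw [← dot_rw htor hp.pos v c, sub_zero]
  rw [dot_rw htor hp.pos u (dotOp p ξ v c)]
  have hper : ∀ i ∈ Finset.range (p - 1),
      (ξ ^ (p - 1 - i)) • star ((mrep p n ξ i) • u) (dotOp p ξ v c)
      = (∑ j ∈ Finset.range (p - 1), (ξ ^ (p - 1 - i) * ξ ^ (p - 1 - j))
          • star (circ ((mrep p n ξ i) • u) ((mrep p n ξ j) • v)) c)
        - (ξ ^ (p - 1 - i)) • dotOp p ξ v c := by
    intro i _
    rw [hXiW i, smul_sub, Finset.smul_sum]
    congr 1
    exact Finset.sum_congr rfl fun j _ => by rw [smul_smul]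
  rw [Finset.sum_congr rfl hper, Finset.sum_sub_distrib,
    sum_xi_smul hp hp3 hξ1 hξ2 htor, sub_zero]

theorem dot_dot_left (hk : ∀ x : A, (p ^ ((p - 1) * k)) • x = 0)
    (hideal : ∀ i : ℕ, IsBraceIdeal (nSet A (p ^ i)))
    {u v : A} (hu : u ∈ nSet A (p ^ k)) (c : A) :
    dotOp p ξ (dotOp p ξ u v) c
    = ∑ i ∈ Finset.range (p - 1), ∑ j ∈ Finset.range (p - 1),
        (ξ ^ (p - 1 - i) * ξ ^ (p - 1 - j))
          • star (star ((mrep p n ξ i) • u) ((mrep p n ξ j) • v)) c := by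
  have h1 : dotOp p ξ u v = ∑ i ∈ Finset.range (p - 1),
      (ξ ^ (p - 1 - i)) • star ((mrep p n ξ i) • u) v := dot_rw htor hp.pos u v
  rw [h1]
  rw [dot_sum_left hp hξ1 hξ2 hideal hk htor _ _
    (fun i _ => nSet_zsmul_mem _ (star_mem_left hideal (nSet_nsmul_mem _ hu) v)) c]
  refine Finset.sum_congr rfl fun i _ => ?_
  rw [dot_zsmul_left hp hξ1 hξ2 hideal hk htor
    (star_mem_left hideal (nSet_nsmul_mem _ hu) v) _ c]
  rw [dot_rw htor hp.pos (star ((mrep p n ξ i) • u) v) c, Finset.smul_sum]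
  refine Finset.sum_congr rfl fun j _ => ?_
  rw [smul_smul]
  congr 2
  rw [← star_nsmul]

theorem profN_dot (hk : ∀ x : A, (p ^ ((p - 1) * k)) • x = 0)
    (hideal : ∀ i : ℕ, IsBraceIdeal (nSet A (p ^ i)))
    {N : ℕ} {G : ℕ → ℕ → A} (hG : ProfN p k N 0 G) (hGptw : Ptw p k G) (c : A) :
    ProfN p k N 0 (fun m m' => dotOp p ξ (G m m') c) := by
  have hrw : (fun m m' => dotOp p ξ (G m m') c)
      = fun m m' => ∑ j ∈ Finset.range (p - 1),
          (ξ ^ (p - 1 - j)) • starF (fun a b => (ξ ^ j) • G a b) (fun _ _ => c) m m' := by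
    funext m m'
    rfl
  rw [hrw]
  refine profN_sum _ _ fun j _ => profN_zsmul _ ?_
  have h := profN_star hideal hk N (F := fun a b => (ξ ^ j) • G a b)
    (fun a b => nSet_zsmul_mem _ (hGptw a b)) (profN_zsmul _ hG) (profN_const c)
  exact h

theorem FF_eq_zero (hk : ∀ x : A, (p ^ ((p - 1) * k)) • x = 0)
    (hideal : ∀ i : ℕ, IsBraceIdeal (nSet A (p ^ i)))
    {u v : A} (hu : u ∈ nSet A (p ^ k)) (hv : v ∈ nSet A (p ^ k)) (c : A) :
    ∑ i ∈ Finset.range (p - 1), ∑ j ∈ Finset.range (p - 1),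
      (ξ ^ (p - 1 - i) * ξ ^ (p - 1 - j)) •
        (star (((mrep p n ξ i) • u + (mrep p n ξ j) • v)
            + star ((mrep p n ξ i) • u) ((mrep p n ξ j) • v)) c
          - star ((mrep p n ξ i) • u + (mrep p n ξ j) • v) c
          - star (star ((mrep p n ξ i) • u) ((mrep p n ξ j) • v)) c) = 0 := by
  have hinner : ∀ i, ∑ j ∈ Finset.range (p - 1), (ξ ^ (p - 1 - j)) •
      (star (((mrep p n ξ i) • u + (mrep p n ξ j) • v)
          + star ((mrep p n ξ i) • u) ((mrep p n ξ j) • v)) c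
        - star ((mrep p n ξ i) • u + (mrep p n ξ j) • v) c
        - star (star ((mrep p n ξ i) • u) ((mrep p n ξ j) • v)) c)
      = - dotOp p ξ (star ((mrep p n ξ i) • u)
            (star ((mrep p n ξ i) • u) (mu ((mrep p n ξ i) • u) v))) c
        + star ((mrep p n ξ i) • u)
            (dotOp p ξ (star ((mrep p n ξ i) • u) (mu ((mrep p n ξ i) • u) v)) c) := by
    intro i
    set X := (mrep p n ξ i) • u with hX
    have hXk : X ∈ nSet A (p ^ k) := nSet_nsmul_mem _ hu
    have hterm : ∀ j ∈ Finset.range (p - 1), (ξ ^ (p - 1 - j)) •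
        (star ((X + (mrep p n ξ j) • v) + star X ((mrep p n ξ j) • v)) c
          - star (X + (mrep p n ξ j) • v) c
          - star (star X ((mrep p n ξ j) • v)) c)
        = (ξ ^ (p - 1 - j)) • star ((mrep p n ξ j) • (lam X v) + X) c
          - (ξ ^ (p - 1 - j)) • star ((mrep p n ξ j) • v + X) c
          - (ξ ^ (p - 1 - j)) • star ((mrep p n ξ j) • (star X v)) c := by
      intro j _
      rw [smul_sub, smul_sub]
      have e1 : (X + (mrep p n ξ j) • v) + star X ((mrep p n ξ j) • v)
          = (mrep p n ξ j) • (lam X v) + X := by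
        rw [star_nsmul, lam, smul_add]; abel
      have e2 : X + (mrep p n ξ j) • v = (mrep p n ξ j) • v + X := add_comm _ _
      have e3 : star X ((mrep p n ξ j) • v) = (mrep p n ξ j) • (star X v) := star_nsmul _ _ _
      rw [e1, e2, e3]
    rw [Finset.sum_congr rfl hterm, Finset.sum_sub_distrib, Finset.sum_sub_distrib]
    rw [E_avg hp hp3 hξ1 hξ2 htor (lam X v) X c, E_avg hp hp3 hξ1 hξ2 htor v X c,
      ← dot_rw htor hp.pos (star X v) c, mu_lam]
    have hmuk : mu X v ∈ nSet A (p ^ k) := mu_mem hideal X hv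
    have e4 : lam X (dotOp p ξ v c) - lam X (dotOp p ξ (mu X v) c)
        = lam X (dotOp p ξ (star X (mu X v)) c) := by
      rw [← lamHom_apply, ← lamHom_apply, ← lamHom_apply, ← map_sub]
      congr 1
      rw [← dot_sub_left hp hξ1 hξ2 hideal hk htor hv hmuk c]
      congr 1
      rw [star_mu_eq]
    have hgk : star X (mu X v) ∈ nSet A (p ^ k) := star_mem_right hideal hmuk X
    have e6 : dotOp p ξ (star X (mu X v)) c - dotOp p ξ (star X v) c
        = - dotOp p ξ (star X (star X (mu X v))) c := by
      rw [← dot_sub_left hp hξ1 hξ2 hideal hk htor hgk (star_mem_right hideal hv X) c]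
      rw [← dot_neg_left hp hξ1 hξ2 hideal hk htor (star_mem_right hideal hgk X) c]
      congr 1
      rw [← star_sub, show mu X v - v = -(star X (mu X v)) from by rw [star_mu_eq]; abel,
        star_neg]
    calc lam X (dotOp p ξ v c) - lam X (dotOp p ξ (mu X v) c) - dotOp p ξ (star X v) c
        = lam X (dotOp p ξ (star X (mu X v)) c) - dotOp p ξ (star X v) c := by rw [e4]
      _ = (dotOp p ξ (star X (mu X v)) c - dotOp p ξ (star X v) c)
            + star X (dotOp p ξ (star X (mu X v)) c) := by rw [lam]; abel
      _ = - dotOp p ξ (star X (star X (mu X v))) c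
            + star X (dotOp p ξ (star X (mu X v)) c) := by rw [e6]
  have hsplit : ∀ i ∈ Finset.range (p - 1),
      (∑ j ∈ Finset.range (p - 1), (ξ ^ (p - 1 - i) * ξ ^ (p - 1 - j)) •
        (star (((mrep p n ξ i) • u + (mrep p n ξ j) • v)
            + star ((mrep p n ξ i) • u) ((mrep p n ξ j) • v)) c
          - star ((mrep p n ξ i) • u + (mrep p n ξ j) • v) c
          - star (star ((mrep p n ξ i) • u) ((mrep p n ξ j) • v)) c))
      = (ξ ^ (p - 1 - i)) •
          (- dotOp p ξ (star ((mrep p n ξ i) • u)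
              (star ((mrep p n ξ i) • u) (mu ((mrep p n ξ i) • u) v))) c
            + star ((mrep p n ξ i) • u)
              (dotOp p ξ (star ((mrep p n ξ i) • u) (mu ((mrep p n ξ i) • u) v)) c)) := by
    intro i _
    rw [← hinner i, Finset.smul_sum]
    exact Finset.sum_congr rfl fun j _ => by rw [smul_smul]
  rw [Finset.sum_congr rfl hsplit]
  have hfin : ∀ i ∈ Finset.range (p - 1), (ξ ^ (p - 1 - i)) •
      (- dotOp p ξ (star ((mrep p n ξ i) • u)
          (star ((mrep p n ξ i) • u) (mu ((mrep p n ξ i) • u) v))) c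
        + star ((mrep p n ξ i) • u)
          (dotOp p ξ (star ((mrep p n ξ i) • u) (mu ((mrep p n ξ i) • u) v)) c))
      = - ((ξ ^ (p - 1 - i)) • dotOp p ξ (star ((mrep p n ξ i) • u)
            (star ((mrep p n ξ i) • u) (mu ((mrep p n ξ i) • u) v))) c)
        + (ξ ^ (p - 1 - i)) • star ((mrep p n ξ i) • u)
            (dotOp p ξ (star ((mrep p n ξ i) • u) (mu ((mrep p n ξ i) • u) v)) c) := by
    intro i _
    rw [smul_add, smul_neg]
  rw [Finset.sum_congr rfl hfin, Finset.sum_add_distrib]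
  -- Piece A
  have hA : ∑ i ∈ Finset.range (p - 1),
      - ((ξ ^ (p - 1 - i)) • dotOp p ξ (star ((mrep p n ξ i) • u)
          (star ((mrep p n ξ i) • u) (mu ((mrep p n ξ i) • u) v))) c) = 0 := by
    rw [Finset.sum_neg_distrib]
    rw [neg_eq_zero]
    set K : ℕ → ℕ → A :=
      fun m m' => dotOp p ξ (star (m • u) (star (m' • u) (mu (m' • u) v))) c with hKdef
    have hb1 : ∀ m, K m 0 = 0 := by
      intro m; simp [hKdef, zero_star, star_zero, dot_zero_left]
    have hb2 : ∀ m', K 0 m' = 0 := by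
      intro m'; simp [hKdef, zero_star, dot_zero_left]
    have hdata : ∀ s t, DD s t K 0 0 ∈ nSet A (p ^ ((s + t) * k)) := by
      intro s t
      have hF1 : ProfN p k (s+t) 0 (fun m (_ : ℕ) => m • u) := profN_mul1 hu (s+t)
      have hPtw1 : Ptw p k (fun m (_ : ℕ) => m • u) := fun a b => nSet_nsmul_mem _ hu
      have hF2 : ProfN p k (s+t) 0 (fun (_ : ℕ) m' => m' • u) := profN_mul2 hu (s+t)
      have hPtw2 : Ptw p k (fun (_ : ℕ) m' => m' • u) := fun a b => nSet_nsmul_mem _ hu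
      have hSFam : ∀ jj : ℕ, ProfN p k (s+t) 0 (fun (_ : ℕ) m' => (star (m' • u))^[jj] v) := by
        intro jj
        induction jj with
        | zero => simpa using profN_const (p := p) (k := k) (N := s+t) v
        | succ jj ih =>
          have hrw : (fun (_ : ℕ) m' => (star (m' • u))^[jj+1] v)
              = starF (fun (_ : ℕ) m' => m' • u) (fun (_ : ℕ) m' => (star (m' • u))^[jj] v) := by
            funext a b
            rw [Function.iterate_succ_apply']
            rfl
          rw [hrw]
          simpa using profN_star hideal hk (s+t) hPtw2 hF2 ih
      have hmuF : ProfN p k (s+t) 0 (fun (_ : ℕ) m' => mu (m' • u) v) := by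
        have hrw : (fun (_ : ℕ) m' => mu (m' • u) v)
            = fun (_ : ℕ) (m' : ℕ) => ∑ jj ∈ Finset.range (p-1),
                ((-1 : ℤ) ^ jj) • (star (m' • u))^[jj] v := by
          funext _a m'
          exact mu_series hideal hk (nSet_nsmul_mem _ hu) v
        rw [hrw]
        exact profN_sum _ _ fun jj _ => profN_zsmul _ (hSFam jj)
      have hinner1 : ProfN p k (s+t) 0 (fun (_ : ℕ) m' => star (m' • u) (mu (m' • u) v)) := by
        exact profN_star hideal hk (s+t) hPtw2 hF2 hmuF
      have houter : ProfN p k (s+t) 0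
          (fun m m' => star (m • u) (star (m' • u) (mu (m' • u) v))) := by
        exact profN_star hideal hk (s+t) hPtw1 hF1 hinner1
      have hPtwOuter : Ptw p k (fun m m' => star (m • u) (star (m' • u) (mu (m' • u) v))) :=
        fun a b => star_mem_left hideal (nSet_nsmul_mem _ hu) _
      have hdotF := profN_dot hp hp3 hξ1 hξ2 htor hk hideal houter hPtwOuter c
      have hres := hdotF s t le_rfl 0 0
      simpa [hKdef] using hres
    have := DV2 hp hξ1 hξ2 hideal hk htor K hb1 hb2 hdata
    simpa [hKdef] using this
  -- Piece B
  have hB : ∑ i ∈ Finset.range (p - 1),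
      (ξ ^ (p - 1 - i)) • star ((mrep p n ξ i) • u)
        (dotOp p ξ (star ((mrep p n ξ i) • u) (mu ((mrep p n ξ i) • u) v)) c) = 0 := by
    set K : ℕ → ℕ → A :=
      fun m m' => star (m • u) (dotOp p ξ (star (m' • u) (mu (m' • u) v)) c) with hKdef
    have hb1 : ∀ m, K m 0 = 0 := by
      intro m; simp [hKdef, zero_star, star_zero, dot_zero_left]
    have hb2 : ∀ m', K 0 m' = 0 := by
      intro m'; simp [hKdef, zero_star, star_zero, dot_zero_left]
    have hdata : ∀ s t, DD s t K 0 0 ∈ nSet A (p ^ ((s + t) * k)) := by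
      intro s t
      have hF1 : ProfN p k (s+t) 0 (fun m (_ : ℕ) => m • u) := profN_mul1 hu (s+t)
      have hPtw1 : Ptw p k (fun m (_ : ℕ) => m • u) := fun a b => nSet_nsmul_mem _ hu
      have hF2 : ProfN p k (s+t) 0 (fun (_ : ℕ) m' => m' • u) := profN_mul2 hu (s+t)
      have hPtw2 : Ptw p k (fun (_ : ℕ) m' => m' • u) := fun a b => nSet_nsmul_mem _ hu
      have hSFam : ∀ jj : ℕ, ProfN p k (s+t) 0 (fun (_ : ℕ) m' => (star (m' • u))^[jj] v) := by
        intro jj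
        induction jj with
        | zero => simpa using profN_const (p := p) (k := k) (N := s+t) v
        | succ jj ih =>
          have hrw : (fun (_ : ℕ) m' => (star (m' • u))^[jj+1] v)
              = starF (fun (_ : ℕ) m' => m' • u) (fun (_ : ℕ) m' => (star (m' • u))^[jj] v) := by
            funext a b
            rw [Function.iterate_succ_apply']
            rfl
          rw [hrw]
          simpa using profN_star hideal hk (s+t) hPtw2 hF2 ih
      have hmuF : ProfN p k (s+t) 0 (fun (_ : ℕ) m' => mu (m' • u) v) := by
        have hrw : (fun (_ : ℕ) m' => mu (m' • u) v)
            = fun (_ : ℕ) (m' : ℕ) => ∑ jj ∈ Finset.range (p-1),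
                ((-1 : ℤ) ^ jj) • (star (m' • u))^[jj] v := by
          funext _a m'
          exact mu_series hideal hk (nSet_nsmul_mem _ hu) v
        rw [hrw]
        exact profN_sum _ _ fun jj _ => profN_zsmul _ (hSFam jj)
      have hinner1 : ProfN p k (s+t) 0 (fun (_ : ℕ) m' => star (m' • u) (mu (m' • u) v)) := by
        exact profN_star hideal hk (s+t) hPtw2 hF2 hmuF
      have hPtwInner1 : Ptw p k (fun (_ : ℕ) m' => star (m' • u) (mu (m' • u) v)) :=
        fun a b => star_mem_left hideal (nSet_nsmul_mem _ hu) _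
      have hdotF := profN_dot hp hp3 hξ1 hξ2 htor hk hideal hinner1 hPtwInner1 c
      have houter : ProfN p k (s+t) 0
          (fun m m' => star (m • u) (dotOp p ξ (star (m' • u) (mu (m' • u) v)) c)) := by
        exact profN_star hideal hk (s+t) hPtw1 hF1 hdotF
      have hres := houter s t le_rfl 0 0
      simpa [hKdef] using hres
    have := DV2 hp hξ1 hξ2 hideal hk htor K hb1 hb2 hdata
    simpa [hKdef] using this
  rw [hA, hB, add_zero]

theorem preLie_main (hk : ∀ x : A, (p ^ ((p - 1) * k)) • x = 0)
    (hideal : ∀ i : ℕ, IsBraceIdeal (nSet A (p ^ i)))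
    {a b : A} (ha : a ∈ nSet A (p ^ k)) (hb : b ∈ nSet A (p ^ k)) (c : A) :
    dotOp p ξ (dotOp p ξ a b) c - dotOp p ξ a (dotOp p ξ b c)
    = dotOp p ξ (dotOp p ξ b a) c - dotOp p ξ b (dotOp p ξ a c) := by
  have hS1 := dot_dot_right hp hp3 hξ1 hξ2 htor a b c
  have hS2 := dot_dot_right hp hp3 hξ1 hξ2 htor b a c
  have hS3 := dot_dot_left hp hp3 hξ1 hξ2 htor hk hideal (v := b) ha c
  have hS4 := dot_dot_left hp hp3 hξ1 hξ2 htor hk hideal (v := a) hb c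
  have hS2' : dotOp p ξ b (dotOp p ξ a c)
      = ∑ i ∈ Finset.range (p - 1), ∑ j ∈ Finset.range (p - 1),
          (ξ ^ (p - 1 - i) * ξ ^ (p - 1 - j))
            • star (circ ((mrep p n ξ j) • b) ((mrep p n ξ i) • a)) c := by
    rw [hS2, Finset.sum_comm]
    exact Finset.sum_congr rfl fun i _ => Finset.sum_congr rfl fun j _ => by rw [mul_comm]
  have hS4' : dotOp p ξ (dotOp p ξ b a) c
      = ∑ i ∈ Finset.range (p - 1), ∑ j ∈ Finset.range (p - 1),
          (ξ ^ (p - 1 - i) * ξ ^ (p - 1 - j))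
            • star (star ((mrep p n ξ j) • b) ((mrep p n ξ i) • a)) c := by
    rw [hS4, Finset.sum_comm]
    exact Finset.sum_congr rfl fun i _ => Finset.sum_congr rfl fun j _ => by rw [mul_comm]
  have hbracket : ∀ x y : A,
      star (circ x y) c - star (circ y x) c - (star (star x y) c - star (star y x) c)
      = (star ((x + y) + star x y) c - star (x + y) c - star (star x y) c)
        - (star ((y + x) + star y x) c - star (y + x) c - star (star y x) c) := by
    intro x y
    rw [circ_eq x y, circ_eq y x,
      show star (x + y) c = star (y + x) c from by rw [add_comm x y]]
    abel
  have hFab := FF_eq_zero hp hp3 hξ1 hξ2 htor hk hideal ha hb c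
  have hFba := FF_eq_zero hp hp3 hξ1 hξ2 htor hk hideal hb ha c
  have hFba' : ∑ i ∈ Finset.range (p - 1), ∑ j ∈ Finset.range (p - 1),
      (ξ ^ (p - 1 - i) * ξ ^ (p - 1 - j)) •
        (star (((mrep p n ξ j) • b + (mrep p n ξ i) • a)
            + star ((mrep p n ξ j) • b) ((mrep p n ξ i) • a)) c
          - star ((mrep p n ξ j) • b + (mrep p n ξ i) • a) c
          - star (star ((mrep p n ξ j) • b) ((mrep p n ξ i) • a)) c) = 0 := by
    rw [Finset.sum_comm]
    rw [show (∑ j ∈ Finset.range (p - 1), ∑ i ∈ Finset.range (p - 1),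
        (ξ ^ (p - 1 - i) * ξ ^ (p - 1 - j)) •
          (star (((mrep p n ξ j) • b + (mrep p n ξ i) • a)
              + star ((mrep p n ξ j) • b) ((mrep p n ξ i) • a)) c
            - star ((mrep p n ξ j) • b + (mrep p n ξ i) • a) c
            - star (star ((mrep p n ξ j) • b) ((mrep p n ξ i) • a)) c))
        = ∑ j ∈ Finset.range (p - 1), ∑ i ∈ Finset.range (p - 1),
          (ξ ^ (p - 1 - j) * ξ ^ (p - 1 - i)) •
            (star (((mrep p n ξ j) • b + (mrep p n ξ i) • a)
                + star ((mrep p n ξ j) • b) ((mrep p n ξ i) • a)) c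
              - star ((mrep p n ξ j) • b + (mrep p n ξ i) • a) c
              - star (star ((mrep p n ξ j) • b) ((mrep p n ξ i) • a)) c)
      from Finset.sum_congr rfl fun j _ => Finset.sum_congr rfl fun i _ => by rw [mul_comm]]
    exact hFba
  have hD : (dotOp p ξ a (dotOp p ξ b c) - dotOp p ξ b (dotOp p ξ a c))
      - (dotOp p ξ (dotOp p ξ a b) c - dotOp p ξ (dotOp p ξ b a) c) = 0 := by
    rw [hS1, hS2', hS3, hS4']
    rw [← Finset.sum_sub_distrib, ← Finset.sum_sub_distrib, ← Finset.sum_sub_distrib]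
    rw [Finset.sum_congr rfl (fun i (_ : i ∈ Finset.range (p-1)) => by
      rw [← Finset.sum_sub_distrib, ← Finset.sum_sub_distrib, ← Finset.sum_sub_distrib])]
    have hterm : ∀ i ∈ Finset.range (p - 1), ∀ j ∈ Finset.range (p - 1),
        (ξ ^ (p - 1 - i) * ξ ^ (p - 1 - j))
            • star (circ ((mrep p n ξ i) • a) ((mrep p n ξ j) • b)) c
          - (ξ ^ (p - 1 - i) * ξ ^ (p - 1 - j))
            • star (circ ((mrep p n ξ j) • b) ((mrep p n ξ i) • a)) c
          - ((ξ ^ (p - 1 - i) * ξ ^ (p - 1 - j))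
              • star (star ((mrep p n ξ i) • a) ((mrep p n ξ j) • b)) c
            - (ξ ^ (p - 1 - i) * ξ ^ (p - 1 - j))
              • star (star ((mrep p n ξ j) • b) ((mrep p n ξ i) • a)) c)
        = (ξ ^ (p - 1 - i) * ξ ^ (p - 1 - j)) •
            (star (((mrep p n ξ i) • a + (mrep p n ξ j) • b)
                + star ((mrep p n ξ i) • a) ((mrep p n ξ j) • b)) c
              - star ((mrep p n ξ i) • a + (mrep p n ξ j) • b) c
              - star (star ((mrep p n ξ i) • a) ((mrep p n ξ j) • b)) c)
          - (ξ ^ (p - 1 - i) * ξ ^ (p - 1 - j)) •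
            (star (((mrep p n ξ j) • b + (mrep p n ξ i) • a)
                + star ((mrep p n ξ j) • b) ((mrep p n ξ i) • a)) c
              - star ((mrep p n ξ j) • b + (mrep p n ξ i) • a) c
              - star (star ((mrep p n ξ j) • b) ((mrep p n ξ i) • a)) c) := by
      intro i _ j _
      rw [← smul_sub, ← smul_sub, ← smul_sub, ← smul_sub]
      rw [hbracket ((mrep p n ξ i) • a) ((mrep p n ξ j) • b)]
    rw [Finset.sum_congr rfl (fun i hi => Finset.sum_congr rfl (fun j hj => hterm i hi j hj))]
    rw [Finset.sum_congr rfl (fun i (_ : i ∈ Finset.range (p-1)) => Finset.sum_sub_distrib _ _),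
      Finset.sum_sub_distrib, hFab, hFba', sub_zero]
  have h2 : (dotOp p ξ (dotOp p ξ a b) c - dotOp p ξ a (dotOp p ξ b c))
      - (dotOp p ξ (dotOp p ξ b a) c - dotOp p ξ b (dotOp p ξ a c))
      = -((dotOp p ξ a (dotOp p ξ b c) - dotOp p ξ b (dotOp p ξ a c))
        - (dotOp p ξ (dotOp p ξ a b) c - dotOp p ξ (dotOp p ξ b a) c)) := by abel
  rw [hD, neg_zero] at h2
  exact sub_eq_zero.mp h2

end PreLie

end LeftBrace

open LeftBrace in
/-- with every `p^i A` an ideal, `ξ` of multiplicative order `p−1` mod `p^n`,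
and `p^{(p−1)k} A = 0`, the operation `a·b = Σ_{i=0}^{p−2} ξ^{p−1−i}((ξ^i a)*b)` satisfies
left/right distributivity and the pre-Lie identity on `p^k A`; in particular
`(p^k A, +, ·)` is a pre-Lie ring. -/
theorem statement14 {A : Type u} [LeftBrace A] (p n k : ℕ) (hp : p.Prime)
    (hcard : Nat.card A = p ^ n)
    (hideal : ∀ i : ℕ, IsBraceIdeal (nSet A (p ^ i)))
    (ξ : ℤ) (hξ1 : ξ ^ (p - 1) ≡ 1 [ZMOD (p ^ n)])
    (hξ2 : ∀ j : ℕ, 0 < j → j < p - 1 → ¬ (ξ ^ j ≡ 1 [ZMOD p]))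
    (hk : ∀ x : A, (p ^ ((p - 1) * k)) • x = 0) :
    ∀ a ∈ nSet A (p ^ k), ∀ b ∈ nSet A (p ^ k), ∀ b' c : A,
      dotOp p ξ (a + b) c = dotOp p ξ a c + dotOp p ξ b c ∧
      dotOp p ξ a (b' + c) = dotOp p ξ a b' + dotOp p ξ a c ∧
      dotOp p ξ (dotOp p ξ a b) c - dotOp p ξ a (dotOp p ξ b c) =
        dotOp p ξ (dotOp p ξ b a) c - dotOp p ξ b (dotOp p ξ a c) := by
  intro a ha b hb b' c
  have htor : ∀ x : A, (p ^ n : ℕ) • x = 0 := torsion_all hcard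
  refine ⟨?_, ?_, ?_⟩
  · exact dot_add_left hp hξ1 hξ2 hideal hk htor ha hb c
  · exact dot_add_right a b' c
  · by_cases hp3 : 3 ≤ p
    · exact preLie_main hp hp3 hξ1 hξ2 htor hk hideal ha hb c
    · have hp2 : p = 2 := by have := hp.two_le; omega
      subst hp2
      have hk2 : ∀ x : A, (2 : ℕ) ^ k • x = 0 := by
        intro x
        have := hk x
        simpa using this
      have ha0 : a = 0 := by obtain ⟨y, hy⟩ := ha; rw [← hy]; exact hk2 y
      have hb0 : b = 0 := by obtain ⟨y, hy⟩ := hb; rw [← hy]; exact hk2 y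
      rw [ha0, hb0]
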